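/- arXiv:2106.10350 — 10 statements merged into one kernel-verified Lean document; each statement's English description precedes it below -/
import Mathlib

section
/- Let π be a permutation matrix in GL_n (over a field k), let N⁻ denote the group of lower unitriangular n×n matrices, and let N⁺ denote the upper unitriangular matrices. Set E⁺ = (π N⁻ π⁻¹) ∩ N⁺ and E⁻ = (π N⁻ π⁻¹) ∩ N⁻. Then every g ∈ π N⁻ π⁻¹ factors uniquely as g = b₋ b₊ with b₋ ∈ E⁻ and b₊ ∈ E⁺. -/
open Matrix

/-- Lower unitriangular matrices. -/
def IsLowerUni {k : Type*} [Field k] {n : ℕ} (M : Matrix (Fin n) (Fin n) k) : Prop :=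
  (∀ i, M i i = 1) ∧ ∀ i j, i < j → M i j = 0

/-- Upper unitriangular matrices. -/
def IsUpperUni {k : Type*} [Field k] {n : ℕ} (M : Matrix (Fin n) (Fin n) k) : Prop :=
  (∀ i, M i i = 1) ∧ ∀ i j, j < i → M i j = 0

/-- Conjugation by the permutation matrix of `π`. -/
def permConj {k : Type*} [Field k] {n : ℕ} (π : Equiv.Perm (Fin n))
    (M : Matrix (Fin n) (Fin n) k) : Matrix (Fin n) (Fin n) k :=
  π.permMatrix k * M * (π⁻¹).permMatrix k

namespace Stmt4Aux

variable {k : Type*} [Field k] {n : ℕ}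

/-- Unitriangular with respect to the ordering pulled back along `f`. -/
def UniT (f : Fin n → Fin n) (M : Matrix (Fin n) (Fin n) k) : Prop :=
  (∀ i, M i i = 1) ∧ ∀ i j, f i < f j → M i j = 0

/-- Strictly lower with respect to the ordering pulled back along `f`. -/
def LowT (f : Fin n → Fin n) (M : Matrix (Fin n) (Fin n) k) : Prop :=
  ∀ i j, f i ≤ f j → M i j = 0

lemma UniT.one (f : Fin n → Fin n) : UniT f (1 : Matrix (Fin n) (Fin n) k) := by
  refine ⟨fun i => Matrix.one_apply_eq i, fun i j hij => ?_⟩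
  exact Matrix.one_apply_ne (fun h => by subst h; exact lt_irrefl _ hij)

lemma UniT.mul {f : Fin n → Fin n} (hf : Function.Injective f)
    {A B : Matrix (Fin n) (Fin n) k} (hA : UniT f A) (hB : UniT f B) :
    UniT f (A * B) := by
  constructor
  · intro i
    rw [Matrix.mul_apply, Finset.sum_eq_single i]
    · rw [hA.1, hB.1, one_mul]
    · intro c _ hc
      rcases lt_or_gt_of_ne (fun h : f c = f i => hc (hf h)) with h | h
      · rw [hB.2 c i h, mul_zero]
      · rw [hA.2 i c h, zero_mul]
    · intro h; exact absurd (Finset.mem_univ i) h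
  · intro i j hij
    rw [Matrix.mul_apply]
    apply Finset.sum_eq_zero
    intro c _
    rcases lt_or_ge (f c) (f j) with h | h
    · rw [hB.2 c j h, mul_zero]
    · rw [hA.2 i c (lt_of_lt_of_le hij h), zero_mul]

lemma LowT.pow_apply {f : Fin n → Fin n} {S : Matrix (Fin n) (Fin n) k}
    (hS : LowT f S) : ∀ (m : ℕ) (i j : Fin n),
    (f i : ℕ) < (f j : ℕ) + m → (S ^ m) i j = 0 := by
  intro m
  induction m with
  | zero =>
    intro i j hij
    rw [pow_zero]
    exact Matrix.one_apply_ne (fun h => by subst h; omega)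
  | succ m ih =>
    intro i j hij
    rw [pow_succ, Matrix.mul_apply]
    apply Finset.sum_eq_zero
    intro c _
    rcases lt_or_ge ((f i : ℕ)) ((f c : ℕ) + m) with h | h
    · rw [ih i c h, zero_mul]
    · have hcj : f c ≤ f j := by rw [Fin.le_def]; omega
      rw [hS c j hcj, mul_zero]

lemma LowT.pow_n {f : Fin n → Fin n} {S : Matrix (Fin n) (Fin n) k}
    (hS : LowT f S) : S ^ n = 0 := by
  ext i j
  rw [Matrix.zero_apply]
  exact hS.pow_apply n i j (by have := (f i).2; omega)

lemma LowT.mul {f : Fin n → Fin n} {S T : Matrix (Fin n) (Fin n) k}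
    (hS : LowT f S) (hT : LowT f T) : LowT f (S * T) := by
  intro i j hij
  rw [Matrix.mul_apply]
  apply Finset.sum_eq_zero
  intro c _
  rcases le_or_gt (f i) (f c) with h | h
  · rw [hS i c h, zero_mul]
  · rw [hT c j (le_of_lt (lt_of_lt_of_le h hij)), mul_zero]

lemma LowT.pow_succ {f : Fin n → Fin n} {S : Matrix (Fin n) (Fin n) k}
    (hS : LowT f S) : ∀ m : ℕ, LowT f (S ^ (m + 1)) := by
  intro m
  induction m with
  | zero => rw [pow_one]; exact hS
  | succ m ih =>
    have h := ih.mul hS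
    rwa [← _root_.pow_succ] at h

/-- Unitriangular matrices have a two-sided inverse that is again unitriangular. -/
lemma UniT.exists_inv {f : Fin n → Fin n} (hf : Function.Injective f)
    {M : Matrix (Fin n) (Fin n) k} (hM : UniT f M) :
    ∃ T, UniT f T ∧ M * T = 1 ∧ T * M = 1 := by
  set S : Matrix (Fin n) (Fin n) k := M - 1 with hSdef
  have hS : LowT f S := by
    intro i j hij
    rcases eq_or_lt_of_le hij with h | h
    · have hij' : i = j := hf (le_antisymm (le_of_eq h) (le_of_eq h.symm))
      subst hij'
      simp [hSdef, hM.1 i]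
    · have hne : i ≠ j := fun hh => by subst hh; exact lt_irrefl _ h
      simp [hSdef, hM.2 i j h, Matrix.one_apply_ne hne]
  have hnegS : LowT f (-S) := fun i j hij => by
    rw [Matrix.neg_apply, hS i j hij, neg_zero]
  have hpow : (-S) ^ n = 0 := hnegS.pow_n
  have hM1 : M = S + 1 := by rw [hSdef]; abel
  refine ⟨∑ m ∈ Finset.range n, (-S) ^ m, ?_, ?_, ?_⟩
  · constructor
    · intro i
      rw [Matrix.sum_apply]
      rw [Finset.sum_eq_single_of_mem 0 (Finset.mem_range.mpr i.pos)]
      · rw [pow_zero, Matrix.one_apply_eq]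
      · intro m _ hm
        obtain ⟨m', rfl⟩ := Nat.exists_eq_succ_of_ne_zero hm
        exact hnegS.pow_succ m' i i le_rfl
    · intro i j hij
      rw [Matrix.sum_apply]
      apply Finset.sum_eq_zero
      intro m _
      cases m with
      | zero =>
        rw [pow_zero]
        exact Matrix.one_apply_ne (fun h => by subst h; exact lt_irrefl _ hij)
      | succ m' => exact hnegS.pow_succ m' i j (le_of_lt hij)
  · have h := mul_geom_sum (-S) n
    rw [hpow, zero_sub] at h
    calc M * ∑ m ∈ Finset.range n, (-S) ^ m
        = -((-S - 1) * ∑ m ∈ Finset.range n, (-S) ^ m) := by rw [hM1]; noncomm_ring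
      _ = 1 := by rw [h, neg_neg]
  · have h := geom_sum_mul (-S) n
    rw [hpow, zero_sub] at h
    calc (∑ m ∈ Finset.range n, (-S) ^ m) * M
        = -((∑ m ∈ Finset.range n, (-S) ^ m) * (-S - 1)) := by rw [hM1]; noncomm_ring
      _ = 1 := by rw [h, neg_neg]

/-- Gaussian elimination: clearing columns from the left. -/
lemma exists_factor (f : Fin n → Fin n) (hf : Function.Injective f) :
    ∀ m : ℕ, ∀ g : Matrix (Fin n) (Fin n) k, UniT f g →
      (∀ i j : Fin n, j < i → (j : ℕ) < n - m → g i j = 0) →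
      ∃ bm bp : Matrix (Fin n) (Fin n) k,
        UniT f bm ∧ UniT id bm ∧ UniT f bp ∧ UniT Fin.rev bp ∧ g = bm * bp := by
  intro m
  induction m with
  | zero =>
    intro g hg hcl
    refine ⟨1, g, UniT.one f, UniT.one id, hg, ⟨hg.1, ?_⟩, (one_mul g).symm⟩
    intro i j hij
    exact hcl i j (Fin.rev_lt_rev.mp hij) (by omega)
  | succ m ih =>
    intro g hg hcl
    by_cases hc : n - (m + 1) < n
    · set j₀ : Fin n := ⟨n - (m + 1), hc⟩ with hj₀
      set N : Matrix (Fin n) (Fin n) k :=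
        Matrix.of (fun i j => if j = j₀ ∧ j₀ < i then g i j₀ else 0) with hN
      have hNapp : ∀ i j, N i j = if j = j₀ ∧ j₀ < i then g i j₀ else 0 := fun i j => rfl
      have hNrow : ∀ j, N j₀ j = 0 := by
        intro j; rw [hNapp]
        simp only [ite_eq_right_iff]
        rintro ⟨rfl, h2⟩
        exact absurd h2 (lt_irrefl _)
      have hNf : ∀ i j, f i < f j → N i j = 0 := by
        intro i j hij
        rw [hNapp]
        simp only [ite_eq_right_iff]
        rintro ⟨rfl, h2⟩
        exact hg.2 i j₀ hij
      have hNlow : ∀ i j, i ≤ j → N i j = 0 := by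
        intro i j hij
        rw [hNapp]
        simp only [ite_eq_right_iff]
        rintro ⟨rfl, h2⟩
        exact absurd (lt_of_lt_of_le h2 hij) (lt_irrefl _)
      have hNN : N * N = 0 := by
        ext i j
        rw [Matrix.mul_apply, Matrix.zero_apply]
        apply Finset.sum_eq_zero
        intro c _
        by_cases hcj : c = j₀
        · subst hcj; rw [hNrow j, mul_zero]
        · rw [hNapp i c, if_neg (fun h => hcj h.1), zero_mul]
      have honeN : ∀ (ε : k) (i j : Fin n), (1 + ε • N) i j = (1 : Matrix (Fin n) (Fin n) k) i j + ε * N i j := by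
        intro ε i j; simp [Matrix.add_apply]
      have hUf : ∀ ε : k, UniT f (1 + ε • N) := by
        intro ε
        constructor
        · intro i
          rw [honeN, Matrix.one_apply_eq, hNlow i i le_rfl, mul_zero, add_zero]
        · intro i j hij
          rw [honeN, hNf i j hij, mul_zero, add_zero]
          exact Matrix.one_apply_ne (fun h => by subst h; exact lt_irrefl _ hij)
      have hUid : ∀ ε : k, UniT id (1 + ε • N) := by
        intro ε
        constructor
        · intro i
          rw [honeN, Matrix.one_apply_eq, hNlow i i le_rfl, mul_zero, add_zero]
        · intro i j hij
          rw [honeN, hNlow i j (le_of_lt hij), mul_zero, add_zero]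
          exact Matrix.one_apply_ne (ne_of_lt hij)
      have hkey : (1 + (1 : k) • N) * (1 + (-1 : k) • N) = 1 := by
        have : (1 + (1 : k) • N) * (1 + (-1 : k) • N)
            = 1 - ((1:k) • N) * ((1:k) • N) := by
          simp only [one_smul, neg_smul]
          noncomm_ring
        rw [this, one_smul, hNN, sub_zero]
      set g' : Matrix (Fin n) (Fin n) k := (1 + (-1 : k) • N) * g with hg'
      have hgfact : g = (1 + (1 : k) • N) * g' := by
        rw [hg', ← mul_assoc, hkey, one_mul]
      have hg'app : ∀ i j, g' i j = g i j - (if j₀ < i then g i j₀ * g j₀ j else 0) := by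
        intro i j
        rw [hg', Matrix.add_mul, Matrix.add_apply, one_mul]
        have : ((-1 : k) • N * g) i j = -(N i j₀ * g j₀ j) := by
          rw [Matrix.smul_mul, Matrix.smul_apply, Matrix.mul_apply]
          rw [Finset.sum_eq_single j₀]
          · simp
          · intro c _ hcj
            rw [hNapp i c, if_neg (fun h => hcj h.1), zero_mul]
          · intro h; exact absurd (Finset.mem_univ j₀) h
        rw [this, hNapp i j₀]
        by_cases h : j₀ < i
        · rw [if_pos ⟨rfl, h⟩, if_pos h]; ring
        · rw [if_neg (fun hh => h hh.2), if_neg h]; ring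
      have hg'U : UniT f g' := UniT.mul hf (hUf (-1)) hg
      have hg'cl : ∀ i j : Fin n, j < i → (j : ℕ) < n - m → g' i j = 0 := by
        intro i j hji hjm
        have hjc : (j : ℕ) ≤ n - (m + 1) := by omega
        rw [hg'app]
        rcases eq_or_lt_of_le hjc with h | h
        · have hjj₀ : j = j₀ := by
            apply Fin.ext; rw [hj₀]; exact h
          subst hjj₀
          rw [if_pos hji, hg.1, mul_one, sub_self]
        · have h1 : g i j = 0 := hcl i j hji h
          have h2 : g j₀ j = 0 := hcl j₀ j (by rw [Fin.lt_def]; exact h) h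
          rw [h1, h2, mul_zero]
          simp
      obtain ⟨bm', bp, hbm'f, hbm'id, hbpf, hbprev, hfact⟩ := ih g' hg'U hg'cl
      refine ⟨(1 + (1 : k) • N) * bm', bp, UniT.mul hf (hUf 1) hbm'f,
        UniT.mul Function.injective_id (hUid 1) hbm'id, hbpf, hbprev, ?_⟩
      rw [mul_assoc, ← hfact, ← hgfact]
    · -- n - (m+1) ≥ n forces n = 0
      have hn : n = 0 := by omega
      subst hn
      refine ⟨1, g, UniT.one f, UniT.one id, hg, ⟨hg.1, fun i j hij => i.elim0⟩, (one_mul g).symm⟩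

end Stmt4Aux

/-- Every `g ∈ π N⁻ π⁻¹` factors uniquely as `g = b₋ b₊` with
`b₋ ∈ E⁻ = (π N⁻ π⁻¹) ∩ N⁻` and `b₊ ∈ E⁺ = (π N⁻ π⁻¹) ∩ N⁺`. -/
theorem stmt_4 {k : Type*} [Field k] {n : ℕ} (π : Equiv.Perm (Fin n))
    (g : Matrix (Fin n) (Fin n) k)
    (hg : ∃ h, IsLowerUni h ∧ g = permConj π h) :
    ∃! p : Matrix (Fin n) (Fin n) k × Matrix (Fin n) (Fin n) k,
      ((∃ h, IsLowerUni h ∧ p.1 = permConj π h) ∧ IsLowerUni p.1) ∧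
      ((∃ h, IsLowerUni h ∧ p.2 = permConj π h) ∧ IsUpperUni p.2) ∧
      g = p.1 * p.2 := by
  classical
  have permConj_apply : ∀ (M : Matrix (Fin n) (Fin n) k) (i j : Fin n),
      permConj π M i j = M (π i) (π j) := by
    intro M i j
    show ((π.toPEquiv.toMatrix : Matrix (Fin n) (Fin n) k) * M *
      ((π⁻¹).toPEquiv.toMatrix : Matrix (Fin n) (Fin n) k)) i j = M (π i) (π j)
    rw [PEquiv.toMatrix_toPEquiv_mul, PEquiv.mul_toMatrix_toPEquiv]
    have : Equiv.symm π⁻¹ = (π : Equiv.Perm (Fin n)) := rfl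
    simp [Matrix.submatrix_apply, this]
  set f : Fin n → Fin n := fun i => π i with hfdef
  have hf : Function.Injective f := π.injective
  -- membership characterization
  have mem_iff : ∀ M : Matrix (Fin n) (Fin n) k,
      (∃ h, IsLowerUni h ∧ M = permConj π h) ↔ Stmt4Aux.UniT f M := by
    intro M
    constructor
    · rintro ⟨h, ⟨hd, hl⟩, rfl⟩
      constructor
      · intro i; rw [permConj_apply]; exact hd _
      · intro i j hij; rw [permConj_apply]; exact hl _ _ hij
    · rintro ⟨hd, hl⟩
      refine ⟨Matrix.of fun a b => M (π.symm a) (π.symm b), ⟨?_, ?_⟩, ?_⟩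
      · intro i; exact hd _
      · intro i j hij
        apply hl
        rw [hfdef]
        simpa using hij
      · ext i j
        rw [permConj_apply]
        simp
  have hlow_iff : ∀ M : Matrix (Fin n) (Fin n) k,
      Stmt4Aux.UniT id M ↔ IsLowerUni M := by
    intro M
    exact ⟨fun h => ⟨h.1, fun i j hij => h.2 i j hij⟩,
      fun h => ⟨h.1, fun i j hij => h.2 i j hij⟩⟩
  have hup_iff : ∀ M : Matrix (Fin n) (Fin n) k,
      Stmt4Aux.UniT Fin.rev M ↔ IsUpperUni M := by
    intro M
    exact ⟨fun h => ⟨h.1, fun i j hij => h.2 i j (Fin.rev_lt_rev.mpr hij)⟩,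
      fun h => ⟨h.1, fun i j hij => h.2 i j (Fin.rev_lt_rev.mp hij)⟩⟩
  have hgU : Stmt4Aux.UniT f g := (mem_iff g).mp hg
  obtain ⟨bm, bp, hbmf, hbmid, hbpf, hbprev, hfact⟩ :=
    Stmt4Aux.exists_factor f hf n g hgU (by intro i j _ hj; omega)
  refine ⟨(bm, bp), ⟨⟨(mem_iff bm).mpr hbmf, (hlow_iff bm).mp hbmid⟩,
    ⟨(mem_iff bp).mpr hbpf, (hup_iff bp).mp hbprev⟩, hfact⟩, ?_⟩
  rintro ⟨q1, q2⟩ ⟨⟨hq1G, hq1L⟩, ⟨hq2G, hq2U⟩, hq⟩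
  -- uniqueness
  have hq1id : Stmt4Aux.UniT id q1 := (hlow_iff q1).mpr hq1L
  have hq2rev : Stmt4Aux.UniT Fin.rev q2 := (hup_iff q2).mpr hq2U
  obtain ⟨T, hTid, hq1T, hTq1⟩ := Stmt4Aux.UniT.exists_inv Function.injective_id hq1id
  obtain ⟨T', hT'rev, hbpT', hT'bp⟩ :=
    Stmt4Aux.UniT.exists_inv (Fin.rev_injective) hbprev
  have hD : (T * bm) * bp = q2 := by
    rw [mul_assoc, ← hfact, hq, ← mul_assoc, hTq1, one_mul]
  have hDid : Stmt4Aux.UniT id (T * bm) := Stmt4Aux.UniT.mul Function.injective_id hTid hbmid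
  have hDrev : Stmt4Aux.UniT Fin.rev (T * bm) := by
    have : T * bm = q2 * T' := by
      rw [← hD, mul_assoc, hbpT', mul_one]
    rw [this]
    exact Stmt4Aux.UniT.mul Fin.rev_injective hq2rev hT'rev
  have hDone : T * bm = 1 := by
    ext i j
    rcases lt_trichotomy i j with h | h | h
    · rw [hDid.2 i j h, Matrix.one_apply_ne (ne_of_lt h)]
    · subst h; rw [hDid.1, Matrix.one_apply_eq]
    · rw [hDrev.2 i j (Fin.rev_lt_rev.mpr h), Matrix.one_apply_ne (ne_of_gt h)]
  have hbmq1 : q1 = bm := by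
    calc q1 = q1 * (T * bm) := by rw [hDone, mul_one]
      _ = (q1 * T) * bm := by rw [mul_assoc]
      _ = bm := by rw [hq1T, one_mul]
  have hbpq2 : q2 = bp := by
    rw [← hD, hDone, one_mul]
  simp [hbmq1, hbpq2]
end

section
/- Let π be a permutation matrix in GL_n over a field, E± = (π N⁻ π⁻¹) ∩ N±. Then every g ∈ π N⁻ π⁻¹ also factors uniquely as g = c₊ c₋ with c₊ ∈ E⁺, c₋ ∈ E⁻, and the map Φ : π N⁻ π⁻¹ → E⁺ × E⁻ sending g (with factorizations g = b₋ b₊ = c₊ c₋) to (b₊, c₋) is a bijection. -/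
open Matrix

/-- The set `π N⁻ π⁻¹`. -/
def SConj {k : Type*} [Field k] {n : ℕ} (π : Equiv.Perm (Fin n)) :
    Set (Matrix (Fin n) (Fin n) k) :=
  {g | ∃ h, IsLowerUni h ∧ g = permConj π h}

/-- `E⁺ = (π N⁻ π⁻¹) ∩ N⁺`. -/
def Eplus {k : Type*} [Field k] {n : ℕ} (π : Equiv.Perm (Fin n)) :
    Set (Matrix (Fin n) (Fin n) k) :=
  {g | g ∈ SConj π ∧ IsUpperUni g}

/-- `E⁻ = (π N⁻ π⁻¹) ∩ N⁻`. -/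
def Eminus {k : Type*} [Field k] {n : ℕ} (π : Equiv.Perm (Fin n)) :
    Set (Matrix (Fin n) (Fin n) k) :=
  {g | g ∈ SConj π ∧ IsLowerUni g}

/-!
All three sets are groups of unitriangular matrices `{M | M.BlockTriangular b, M i i = 1}` for
an injective `b`: `π N⁻ π⁻¹` for `b = toDual ∘ π` (its entries vanish where `π i < π j`), and
`E⁺`, `E⁻` its intersections with the cases `b = id`, `b = toDual`; so `E⁺ ∩ E⁻ = 1`.
Clearing the strictly upper part of `g ∈ π N⁻ π⁻¹` column by column from the right subtracts
`g a j` times row `j` from row `a < j`. This is left multiplication by an element of `E⁺`, because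
the multipliers sit at positions where `g` itself may be nonzero. Hence `g ∈ E⁺ E⁻`, uniquely as
`E⁺ ∩ E⁻ = 1`. The `g` with `Φ g = (u, l)` are the points of `E⁻ u ∩ E⁺ l`; factoring
`l u⁻¹ = c₊ c₋` shows that there is exactly one, `c₋ u = c₊⁻¹ l`.
-/

open Function OrderDual

namespace Submonoid

variable {M : Type*} [Monoid M] {S : Submonoid M}

theorem mem_units_iff_val_mem (hS : ∀ u : Mˣ, (u : M) ∈ S → ↑u⁻¹ ∈ S) {u : Mˣ} :
    u ∈ S.units ↔ (u : M) ∈ S :=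
  ⟨fun h => h.1, fun h => ⟨h, hS u h⟩⟩

theorem ofUnits_units_eq (hunit : ∀ x ∈ S, IsUnit x) (hS : ∀ u : Mˣ, (u : M) ∈ S → ↑u⁻¹ ∈ S) :
    S.units.ofUnits = S := by
  refine le_antisymm S.ofUnits_units_le fun x hx => ?_
  obtain ⟨u, rfl⟩ := hunit x hx
  exact ⟨u, (mem_units_iff_val_mem hS).2 hx, rfl⟩

end Submonoid

namespace Subgroup

variable {M : Type*} [Monoid M] {H A B : Subgroup Mˣ}

theorem ofUnits_mul_injective (hAB : Disjoint A B) {a a' b b' : M} (ha : a ∈ A.ofUnits)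
    (ha' : a' ∈ A.ofUnits) (hb : b ∈ B.ofUnits) (hb' : b' ∈ B.ofUnits) (h : a * b = a' * b') :
    a = a' ∧ b = b' := by
  obtain ⟨x, hx, rfl⟩ := ha
  obtain ⟨x', hx', rfl⟩ := ha'
  obtain ⟨y, hy, rfl⟩ := hb
  obtain ⟨y', hy', rfl⟩ := hb'
  have := mul_injective_of_disjoint hAB (a₁ := (⟨x, hx⟩, ⟨y, hy⟩)) (a₂ := (⟨x', hx'⟩, ⟨y', hy'⟩))
    (Units.ext h)
  simp only [Prod.mk.injEq, Subtype.mk.injEq] at this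
  exact ⟨congrArg _ this.1, congrArg _ this.2⟩

theorem existsUnique_ofUnits_mul (hAB : Disjoint A B)
    (hfac : ∀ g ∈ H, ∃ a ∈ A, ∃ b ∈ B, a * b = g) :
    ∀ g ∈ (H.ofUnits : Set M), ∃! p : M × M,
      p.1 ∈ (A.ofUnits : Set M) ∧ p.2 ∈ (B.ofUnits : Set M) ∧ g = p.1 * p.2 := by
  rintro _ ⟨g, hg, rfl⟩
  obtain ⟨a, ha, b, hb, rfl⟩ := hfac g hg
  refine ⟨(a, b), ⟨⟨a, ha, rfl⟩, ⟨b, hb, rfl⟩, Units.val_mul a b⟩, ?_⟩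
  rintro ⟨a', b'⟩ ⟨ha', hb', h⟩
  obtain ⟨rfl, rfl⟩ :=
    ofUnits_mul_injective hAB ha' ⟨a, ha, rfl⟩ hb' ⟨b, hb, rfl⟩ (h.symm.trans (Units.val_mul a b))
  rfl

theorem existsUnique_eq_mul_and_eq_mul (hA : A ≤ H) (hB : B ≤ H) (hAB : Disjoint A B)
    (hfac : ∀ g ∈ H, ∃ a ∈ A, ∃ b ∈ B, a * b = g) {u l : M} (hu : u ∈ A.ofUnits)
    (hl : l ∈ B.ofUnits) :
    ∃! g : (H.ofUnits : Set M), (∃ b ∈ (B.ofUnits : Set M), (g : M) = b * u) ∧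
      ∃ a ∈ (A.ofUnits : Set M), (g : M) = a * l := by
  obtain ⟨x, hx, rfl⟩ := hu
  obtain ⟨y, hy, rfl⟩ := hl
  obtain ⟨a, ha, b, hb, hab⟩ := hfac (y * x⁻¹) (mul_mem (hB hy) (inv_mem (hA hx)))
  have hbx : b * x = a⁻¹ * y := by
    rw [eq_inv_mul_iff_mul_eq, ← mul_assoc, hab, inv_mul_cancel_right]
  refine ⟨⟨(b * x : Mˣ), b * x, H.mul_mem (hB hb) (hA hx), rfl⟩,
    ⟨⟨b, ⟨b, hb, rfl⟩, rfl⟩, (a⁻¹ : Mˣ), ⟨a⁻¹, A.inv_mem ha, rfl⟩, congrArg Units.val hbx⟩, ?_⟩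
  rintro g ⟨⟨_, ⟨b', hb', rfl⟩, hgb⟩, _, ⟨a', ha', rfl⟩, hga⟩
  obtain ⟨z, -, hz⟩ := g.2
  rw [← hz] at hgb hga
  replace hgb : z = b' * x := Units.ext hgb
  replace hga : z = a' * y := Units.ext hga
  have hzA : z * (b * x)⁻¹ = a' * a := by rw [hga, hbx]; group
  have hzB : z * (b * x)⁻¹ = b' * b⁻¹ := by rw [hgb]; group
  have hz1 : z * (b * x)⁻¹ = 1 :=
    disjoint_def.1 hAB (hzA ▸ A.mul_mem ha' ha) (hzB ▸ B.mul_mem hb' (B.inv_mem hb))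
  exact Subtype.ext (hz.symm.trans (congrArg Units.val (mul_inv_eq_one.1 hz1)))

theorem bijective_of_ofUnits_mul (hA : A ≤ H) (hB : B ≤ H) (hAB : Disjoint A B)
    (hfac : ∀ g ∈ H, ∃ a ∈ A, ∃ b ∈ B, a * b = g) :
    ∀ Φ : ↥(H.ofUnits : Set M) → ↥(A.ofUnits : Set M) × ↥(B.ofUnits : Set M),
      (∀ g : (H.ofUnits : Set M),
        (∃ bm ∈ (B.ofUnits : Set M), (g : M) = bm * ((Φ g).1 : M)) ∧
        (∃ cp ∈ (A.ofUnits : Set M), (g : M) = cp * ((Φ g).2 : M))) →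
      Bijective Φ := by
  intro Φ hΦ
  have hΦ_eq_iff : ∀ g p, Φ g = p ↔ (∃ bm ∈ (B.ofUnits : Set M), (g : M) = bm * p.1) ∧
      ∃ cp ∈ (A.ofUnits : Set M), (g : M) = cp * p.2 := by
    refine fun g p => ⟨fun h => h ▸ hΦ g, ?_⟩
    rintro ⟨⟨bm', hbm', hbm'g⟩, cp', hcp', hcp'g⟩
    obtain ⟨⟨bm, hbm, hbmg⟩, cp, hcp, hcpg⟩ := hΦ g
    have h1 := ofUnits_mul_injective hAB.symm hbm hbm' (Φ g).1.2 p.1.2 (hbmg.symm.trans hbm'g)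
    have h2 := ofUnits_mul_injective hAB hcp hcp' (Φ g).2.2 p.2.2 (hcpg.symm.trans hcp'g)
    exact Prod.ext (Subtype.ext h1.2) (Subtype.ext h2.2)
  refine (bijective_iff_existsUnique Φ).2 fun p => ?_
  simp only [hΦ_eq_iff]
  exact existsUnique_eq_mul_and_eq_mul hA hB hAB hfac p.1.2 p.2.2

end Subgroup

namespace Matrix

variable {m α β R : Type*} [LinearOrder α] [LinearOrder β]

section Unitriangular

variable [Fintype m] {b : m → α}

theorem BlockTriangular.mul_apply_self [NonUnitalNonAssocSemiring R] {M N : Matrix m m R}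
    (hM : M.BlockTriangular b) (hN : N.BlockTriangular b) (hb : Injective b) (i : m) :
    (M * N) i i = M i i * N i i := by
  refine Finset.sum_eq_single i (fun j _ hji => ?_) (by simp)
  rcases lt_or_gt_of_ne (hb.ne hji) with h | h
  · exact mul_eq_zero_of_left (hM h) _
  · exact mul_eq_zero_of_right _ (hN h)

variable [DecidableEq m]

variable (R) in
def unitriangular [Semiring R] (hb : Injective b) : Submonoid (Matrix m m R) where
  carrier := {M | M.BlockTriangular b ∧ ∀ i, M i i = 1}
  mul_mem' {M N} hM hN :=
    ⟨hM.1.mul hN.1, fun i => by rw [hM.1.mul_apply_self hN.1 hb, hM.2, hN.2, one_mul]⟩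
  one_mem' := ⟨blockTriangular_one, one_apply_eq⟩

theorem unitriangular_inf_eq_bot [Semiring R] [LinearOrder m] :
    unitriangular R (injective_id (α := m)) ⊓ unitriangular R (toDual (α := m)).injective = ⊥ := by
  refine eq_bot_iff.2 fun M ⟨hU, hL⟩ => Submonoid.mem_bot.2 ?_
  ext i j
  rcases lt_trichotomy i j with h | rfl | h
  · rw [hL.1 h, one_apply_ne h.ne]
  · rw [hU.2, one_apply_eq]
  · rw [hU.1 h, one_apply_ne h.ne']

variable [CommRing R] {hb : Injective b} {b' : m → β} {hb' : Injective b'}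

theorem det_eq_one_of_mem_unitriangular {M : Matrix m m R} (hM : M ∈ unitriangular R hb) :
    M.det = 1 := by
  classical
  rw [hM.1.det]
  refine Finset.prod_eq_one fun a _ => ?_
  have : M.toSquareBlock b a = 1 := by
    ext ⟨i, hi⟩ ⟨j, hj⟩
    obtain rfl : i = j := hb (hi.trans hj.symm)
    simp [toSquareBlock_def, hM.2 i]
  rw [this, det_one]

theorem isUnit_of_mem_unitriangular {M : Matrix m m R} (hM : M ∈ unitriangular R hb) :
    IsUnit M :=
  (isUnit_iff_isUnit_det M).2 (det_eq_one_of_mem_unitriangular hM ▸ isUnit_one)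

theorem val_inv_mem_unitriangular {u : GL m R} (hu : (u : Matrix m m R) ∈ unitriangular R hb) :
    ↑u⁻¹ ∈ unitriangular R hb := by
  have hinv : (↑u⁻¹ : Matrix m m R).BlockTriangular b := by
    rw [coe_units_inv]
    exact blockTriangular_inv_of_blockTriangular hu.1
  refine ⟨hinv, fun i => ?_⟩
  have := congrFun (congrFun u.inv_mul i) i
  rwa [hinv.mul_apply_self hu.1 hb, hu.2, mul_one, one_apply_eq] at this

theorem val_inv_mem_unitriangular_inf {u : GL m R}
    (hu : (u : Matrix m m R) ∈ unitriangular R hb ⊓ unitriangular R hb') :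
    ↑u⁻¹ ∈ unitriangular R hb ⊓ unitriangular R hb' :=
  ⟨val_inv_mem_unitriangular hu.1, val_inv_mem_unitriangular hu.2⟩

theorem ofUnits_units_unitriangular :
    (unitriangular R hb).units.ofUnits = unitriangular R hb :=
  Submonoid.ofUnits_units_eq (fun _ => isUnit_of_mem_unitriangular)
    fun _ => val_inv_mem_unitriangular

theorem ofUnits_units_unitriangular_inf :
    (unitriangular R hb ⊓ unitriangular R hb').units.ofUnits =
      unitriangular R hb ⊓ unitriangular R hb' :=
  Submonoid.ofUnits_units_eq (fun _ h => isUnit_of_mem_unitriangular h.1)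
    fun _ => val_inv_mem_unitriangular_inf

theorem disjoint_units_unitriangular_inf [LinearOrder m] :
    Disjoint (unitriangular R hb ⊓ unitriangular R (injective_id (α := m))).units
      (unitriangular R hb ⊓ unitriangular R (toDual (α := m)).injective).units := by
  refine Subgroup.disjoint_def.2 fun {u} hU hL => Units.ext ?_
  have : (u : Matrix m m R) ∈ (⊥ : Submonoid (Matrix m m R)) :=
    unitriangular_inf_eq_bot (m := m) (R := R) ▸ ⟨hU.1.2, hL.1.2⟩
  exact Submonoid.mem_bot.1 this

end Unitriangular

section Elimination

variable {n : ℕ} {b : Fin n → α} {hb : Injective b}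

section Ring

variable [Ring R]

theorem exists_upper_mul_clears_column {M : Matrix (Fin n) (Fin n) R}
    (hM : M ∈ unitriangular R hb) (j : Fin n) (hj : ∀ a c, a < c → j < c → M a c = 0) :
    ∃ u ∈ unitriangular R hb ⊓ unitriangular R injective_id,
      ∀ a c, a < c → j ≤ c → (u * M) a c = 0 := by
  set E : Matrix (Fin n) (Fin n) R := of fun a c => if a < j ∧ c = j then M a c else 0
  have hEM : ∀ a c, (E * M) a c = if a < j then M a j * M j c else 0 := by
    intro a c
    simp [E, mul_apply, ite_and]
  have hE : ∀ a c, a ≠ c → (1 - E) a c = -if a < j ∧ c = j then M a c else 0 := by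
    intro a c hac
    rw [sub_apply, one_apply_ne hac, zero_sub]
    rfl
  have hdiag : ∀ a, (1 - E) a a = 1 := fun a => by
    rw [sub_apply, one_apply_eq, sub_eq_self]
    exact if_neg fun h => (h.2 ▸ h.1).false
  refine ⟨1 - E, ⟨⟨fun a c hca => ?_, hdiag⟩, fun a c hca => ?_, hdiag⟩, fun a c hac hjc => ?_⟩
  · rw [hE a c fun h => hca.ne' (congrArg b h), hM.1 hca, ite_self, neg_zero]
  · have hca : c < a := hca
    rw [hE a c hca.ne', if_neg fun h => (h.2 ▸ h.1).asymm hca, neg_zero]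
  · rw [sub_mul, one_mul, sub_apply, hEM]
    rcases hjc.eq_or_lt with rfl | hjc
    · rw [if_pos hac, hM.2, mul_one, sub_self]
    · rw [hj a c hac hjc, hj j c hjc hjc, mul_zero, ite_self, sub_zero]

theorem exists_unitriangular_mul_mem_lower {M : Matrix (Fin n) (Fin n) R}
    (hM : M ∈ unitriangular R hb) :
    ∃ u ∈ unitriangular R hb ⊓ unitriangular R injective_id,
      u * M ∈ unitriangular R (toDual (α := Fin n)).injective := by
  suffices ∀ k : ℕ, ∀ M ∈ unitriangular R hb, (∀ a c : Fin n, a < c → k ≤ c → M a c = 0) →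
      ∃ u ∈ unitriangular R hb ⊓ unitriangular R injective_id,
        u * M ∈ unitriangular R (toDual (α := Fin n)).injective from
    this n M hM fun a c _ h => absurd c.isLt h.not_gt
  intro k
  induction k with
  | zero =>
    intro M hM hM0
    refine ⟨1, one_mem _, ?_⟩
    rw [one_mul]
    exact ⟨fun a c hac => hM0 a c hac (Nat.zero_le _), hM.2⟩
  | succ k ih =>
    intro M hM hMk
    by_cases hk : k < n
    · obtain ⟨u₀, hu₀, hu₀M⟩ := exists_upper_mul_clears_column hM ⟨k, hk⟩
        fun a c hac hc => hMk a c hac hc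
      obtain ⟨u, hu, huM⟩ := ih (u₀ * M) (mul_mem hu₀.1 hM) hu₀M
      exact ⟨u * u₀, mul_mem hu hu₀, by rwa [mul_assoc]⟩
    · exact ih M hM fun a c _ hc => absurd c.isLt (by omega)

end Ring

theorem exists_mul_eq_of_mem_units_unitriangular [CommRing R] {g : GL (Fin n) R}
    (hg : g ∈ (unitriangular R hb).units) :
    ∃ a ∈ (unitriangular R hb ⊓ unitriangular R injective_id).units,
      ∃ c ∈ (unitriangular R hb ⊓ unitriangular R (toDual (α := Fin n)).injective).units,
        a * c = g := by
  obtain ⟨u, hu, hug⟩ := exists_unitriangular_mul_mem_lower hg.1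
  obtain ⟨v, rfl⟩ := isUnit_of_mem_unitriangular hu.1
  refine ⟨v⁻¹, ?_, v * g, ?_, inv_mul_cancel_left v g⟩
  · rw [Submonoid.mem_units_iff_val_mem fun _ => val_inv_mem_unitriangular_inf]
    exact val_inv_mem_unitriangular_inf hu
  · rw [Submonoid.mem_units_iff_val_mem fun _ => val_inv_mem_unitriangular_inf]
    exact ⟨mul_mem hu.1 hg.1, hug⟩

end Elimination

end Matrix

section PermConj

variable {k : Type*} [Field k] {n : ℕ} (π : Equiv.Perm (Fin n))

theorem permConj_eq_submatrix (M : Matrix (Fin n) (Fin n) k) :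
    permConj π M = M.submatrix π π := by
  ext i j
  simp only [permConj, Equiv.Perm.permMatrix]
  rw [PEquiv.toMatrix_toPEquiv_mul, PEquiv.mul_toMatrix_toPEquiv]
  simp [Equiv.Perm.inv_def]

theorem isLowerUni_iff {M : Matrix (Fin n) (Fin n) k} :
    IsLowerUni M ↔ M ∈ unitriangular k (toDual (α := Fin n)).injective :=
  ⟨fun h => ⟨fun i j hij => h.2 i j hij, h.1⟩, fun h => ⟨h.2, fun _ _ hij => h.1 hij⟩⟩

theorem isUpperUni_iff {M : Matrix (Fin n) (Fin n) k} :
    IsUpperUni M ↔ M ∈ unitriangular k (injective_id (α := Fin n)) :=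
  ⟨fun h => ⟨fun i j hij => h.2 i j hij, h.1⟩, fun h => ⟨h.2, fun _ _ hij => h.1 hij⟩⟩

theorem mem_SConj_iff {M : Matrix (Fin n) (Fin n) k} :
    M ∈ SConj π ↔ M ∈ unitriangular k ((toDual (α := Fin n)).injective.comp π.injective) := by
  constructor
  · rintro ⟨h, hh, rfl⟩
    rw [permConj_eq_submatrix]
    exact ⟨(isLowerUni_iff.1 hh).1.submatrix, fun i => hh.1 (π i)⟩
  · intro hM
    refine ⟨M.submatrix π.symm π.symm,
      isLowerUni_iff.2 ⟨fun i j hij => hM.1 ?_, fun i => hM.2 _⟩, ?_⟩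
    · simpa using hij
    · rw [permConj_eq_submatrix, submatrix_submatrix]
      simp

theorem SConj_eq_ofUnits :
    SConj (k := k) π =
      (unitriangular k ((toDual (α := Fin n)).injective.comp π.injective)).units.ofUnits := by
  rw [ofUnits_units_unitriangular]
  ext M
  exact mem_SConj_iff π

theorem Eplus_eq_ofUnits :
    Eplus (k := k) π = (unitriangular k ((toDual (α := Fin n)).injective.comp π.injective) ⊓
      unitriangular k (injective_id (α := Fin n))).units.ofUnits := by
  rw [ofUnits_units_unitriangular_inf]
  ext M
  exact and_congr (mem_SConj_iff π) isUpperUni_iff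

theorem Eminus_eq_ofUnits :
    Eminus (k := k) π = (unitriangular k ((toDual (α := Fin n)).injective.comp π.injective) ⊓
      unitriangular k (toDual (α := Fin n)).injective).units.ofUnits := by
  rw [ofUnits_units_unitriangular_inf]
  ext M
  exact and_congr (mem_SConj_iff π) isLowerUni_iff

end PermConj

/-- Every `g ∈ π N⁻ π⁻¹` factors uniquely as `g = c₊ c₋` with `c₊ ∈ E⁺`, `c₋ ∈ E⁻`;
and the map `Φ : π N⁻ π⁻¹ → E⁺ × E⁻`, sending `g` (with factorizations
`g = b₋ b₊ = c₊ c₋`) to `(b₊, c₋)`, is a bijection. -/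
theorem stmt_5 {k : Type*} [Field k] {n : ℕ} (π : Equiv.Perm (Fin n)) :
    (∀ g ∈ SConj (k := k) π,
      ∃! p : Matrix (Fin n) (Fin n) k × Matrix (Fin n) (Fin n) k,
        p.1 ∈ Eplus π ∧ p.2 ∈ Eminus π ∧ g = p.1 * p.2) ∧
    (∀ Φ : (SConj (k := k) π) → (Eplus (k := k) π) × (Eminus (k := k) π),
      (∀ g : SConj (k := k) π,
        (∃ bm ∈ Eminus π, (g : Matrix (Fin n) (Fin n) k) = bm * ((Φ g).1 : Matrix (Fin n) (Fin n) k)) ∧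
        (∃ cp ∈ Eplus π, (g : Matrix (Fin n) (Fin n) k) = cp * ((Φ g).2 : Matrix (Fin n) (Fin n) k))) →
      Function.Bijective Φ) := by
  rw [SConj_eq_ofUnits, Eplus_eq_ofUnits, Eminus_eq_ofUnits]
  exact ⟨Subgroup.existsUnique_ofUnits_mul disjoint_units_unitriangular_inf
      fun _ => exists_mul_eq_of_mem_units_unitriangular,
    Subgroup.bijective_of_ofUnits_mul (Submonoid.units_mono inf_le_left)
      (Submonoid.units_mono inf_le_left) disjoint_units_unitriangular_inf
      fun _ => exists_mul_eq_of_mem_units_unitriangular⟩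
end

section
/- Let g, g' ∈ GL_n(k) with g' = g b for some invertible upper triangular matrix b, and let X ∈ Mat_n(k). Then the block matrices [[X, g], [w₀ g⁻¹, 0]] and [[X, g'], [w₀ g'⁻¹, 0]] lie in the same double coset B⁻_{2n} \ GL_{2n} / B_{2n}, where B_{2n} (resp. B⁻_{2n}) is the group of invertible upper (resp. lower) triangular 2n×2n matrices. Equivalently, for every (i,j), the ranks of the top-left i×j submatrices of the two block matrices agree. -/
/-
Right multiplication by `diag(1, b)` turns the block `g` into `g b`, and left multiplication by
`diag(1, w₀ b⁻¹ w₀)` turns the block `w₀ g⁻¹` into `w₀ (g b)⁻¹`. The first factor is upper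
triangular, and the second is lower triangular because conjugation by `w₀` reverses the order of
the indices. If `L` is lower and `U` upper triangular, every northwest corner of `L M U` is the
product of the corresponding corners of `L`, `M` and `U`, and corners of invertible triangular
matrices are invertible, so the northwest ranks agree.
-/

open Matrix

def w0 (k : Type*) [Field k] (n : ℕ) : Matrix (Fin n) (Fin n) k :=
  Matrix.of fun i j => if j = i.rev then 1 else 0

noncomputable def blockM {k : Type*} [Field k] {n : ℕ} (X g : Matrix (Fin n) (Fin n) k) :
    Matrix (Fin (n + n)) (Fin (n + n)) k :=
  (Matrix.fromBlocks X g (w0 k n * g⁻¹) 0).submatrix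
    finSumFinEquiv.symm finSumFinEquiv.symm

/-- Invertible lower triangular matrices. -/
def IsLowerTri {k : Type*} [Field k] {m : ℕ} (M : Matrix (Fin m) (Fin m) k) : Prop :=
  ∀ i j, i < j → M i j = 0

/-- Invertible upper triangular matrices. -/
def IsUpperTri {k : Type*} [Field k] {m : ℕ} (M : Matrix (Fin m) (Fin m) k) : Prop :=
  ∀ i j, j < i → M i j = 0

theorem Fin.sum_univ_eq_sum_castLE {M : Type*} [AddCommMonoid M] {i m : ℕ} (h : i ≤ m)
    (f : Fin m → M) (hf : ∀ s : Fin m, i ≤ s → f s = 0) :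
    ∑ s, f s = ∑ s : Fin i, f (Fin.castLE h s) := by
  refine (Fintype.sum_of_injective _ (Fin.castLE_injective h) _ f (fun s hs => hf s ?_)
    fun _ => rfl).symm
  by_contra! hsi
  exact hs ⟨⟨s, hsi⟩, rfl⟩

namespace Matrix

variable {R : Type*} {m i j : ℕ}

theorem submatrix_castLE_mul_of_isLowerTriangular [Semiring R] {ι κ : Type*}
    {L : Matrix (Fin m) (Fin m) R} (hL : L.IsLowerTriangular) (M : Matrix (Fin m) ι R)
    (hi : i ≤ m) (c : κ → ι) :
    (L * M).submatrix (Fin.castLE hi) c =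
      L.submatrix (Fin.castLE hi) (Fin.castLE hi) * M.submatrix (Fin.castLE hi) c := by
  ext r t
  refine Fin.sum_univ_eq_sum_castLE hi _ fun s hs => ?_
  exact mul_eq_zero_of_left
    (hL (show Fin.castLE hi r < s from Fin.lt_def.2 (r.isLt.trans_le hs))) _

theorem submatrix_castLE_mul_of_isUpperTriangular [Semiring R] {ι κ : Type*}
    {U : Matrix (Fin m) (Fin m) R} (hU : U.IsUpperTriangular) (M : Matrix ι (Fin m) R)
    (hj : j ≤ m) (r : κ → ι) :
    (M * U).submatrix r (Fin.castLE hj) =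
      M.submatrix r (Fin.castLE hj) * U.submatrix (Fin.castLE hj) (Fin.castLE hj) := by
  ext t c
  refine Fin.sum_univ_eq_sum_castLE hj _ fun s hs => ?_
  exact mul_eq_zero_of_right _ (hU (Fin.lt_def.2 (c.isLt.trans_le hs)))

theorem IsLowerTriangular.isUnit_det_submatrix_castLE [CommRing R]
    {L : Matrix (Fin m) (Fin m) R} (hL : L.IsLowerTriangular) (hdet : IsUnit L.det) (hi : i ≤ m) :
    IsUnit (L.submatrix (Fin.castLE hi) (Fin.castLE hi)).det := by
  rw [det_of_isLowerTriangular L hL, IsUnit.prod_univ_iff] at hdet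
  rw [det_of_isLowerTriangular (L.submatrix (Fin.castLE hi) (Fin.castLE hi)) fun _ _ h => hL h,
    IsUnit.prod_univ_iff]
  exact fun s => hdet _

theorem IsUpperTriangular.isUnit_det_submatrix_castLE [CommRing R]
    {U : Matrix (Fin m) (Fin m) R} (hU : U.IsUpperTriangular) (hdet : IsUnit U.det) (hj : j ≤ m) :
    IsUnit (U.submatrix (Fin.castLE hj) (Fin.castLE hj)).det := by
  rw [det_of_isUpperTriangular hU, IsUnit.prod_univ_iff] at hdet
  rw [det_of_isUpperTriangular (M := U.submatrix (Fin.castLE hj) (Fin.castLE hj))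
    fun _ _ h => hU h, IsUnit.prod_univ_iff]
  exact fun s => hdet _

theorem rank_submatrix_castLE_lower_mul_mul_upper [CommRing R] {L U : Matrix (Fin m) (Fin m) R}
    (hLt : L.IsLowerTriangular) (hL : IsUnit L.det) (hUt : U.IsUpperTriangular) (hU : IsUnit U.det)
    (M : Matrix (Fin m) (Fin m) R) (hi : i ≤ m) (hj : j ≤ m) :
    ((L * M * U).submatrix (Fin.castLE hi) (Fin.castLE hj)).rank =
      (M.submatrix (Fin.castLE hi) (Fin.castLE hj)).rank := by
  have hsplit : (L * M * U).submatrix (Fin.castLE hi) (Fin.castLE hj) =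
      L.submatrix (Fin.castLE hi) (Fin.castLE hi) * M.submatrix (Fin.castLE hi) (Fin.castLE hj) *
        U.submatrix (Fin.castLE hj) (Fin.castLE hj) := by
    rw [submatrix_castLE_mul_of_isUpperTriangular hUt _ hj,
      submatrix_castLE_mul_of_isLowerTriangular hLt _ hi]
  rw [hsplit, rank_mul_eq_left_of_isUnit_det _ _ (hUt.isUnit_det_submatrix_castLE hU hj),
    rank_mul_eq_right_of_isUnit_det _ _ (hLt.isUnit_det_submatrix_castLE hL hi)]

end Matrix

section BlockDiagonal

variable {R : Type*} {m n : ℕ}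

def blockDiag₂ [Zero R] (A : Matrix (Fin m) (Fin m) R) (D : Matrix (Fin n) (Fin n) R) :
    Matrix (Fin (m + n)) (Fin (m + n)) R :=
  (fromBlocks A 0 0 D).submatrix finSumFinEquiv.symm finSumFinEquiv.symm

theorem isLowerTriangular_blockDiag₂ [Zero R] {A : Matrix (Fin m) (Fin m) R}
    {D : Matrix (Fin n) (Fin n) R} (hA : A.IsLowerTriangular) (hD : D.IsLowerTriangular) :
    (blockDiag₂ A D).IsLowerTriangular := by
  intro p q hpq
  induction p using Fin.addCases <;> induction q using Fin.addCases <;>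
    simp only [blockDiag₂, submatrix_apply, finSumFinEquiv_symm_apply_castAdd,
      finSumFinEquiv_symm_apply_natAdd, fromBlocks_apply₁₁, fromBlocks_apply₁₂,
      fromBlocks_apply₂₁, fromBlocks_apply₂₂, Matrix.zero_apply]
  case left.left => exact hA hpq
  case right.right => exact hD (Nat.add_lt_add_iff_left.1 hpq)

theorem transpose_blockDiag₂ [Zero R] (A : Matrix (Fin m) (Fin m) R)
    (D : Matrix (Fin n) (Fin n) R) :
    (blockDiag₂ A D)ᵀ = blockDiag₂ Aᵀ Dᵀ := by
  simp [blockDiag₂, transpose_submatrix, fromBlocks_transpose]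

theorem isUpperTriangular_blockDiag₂ [Zero R] {A : Matrix (Fin m) (Fin m) R}
    {D : Matrix (Fin n) (Fin n) R} (hA : A.IsUpperTriangular) (hD : D.IsUpperTriangular) :
    (blockDiag₂ A D).IsUpperTriangular := by
  have h := isLowerTriangular_blockDiag₂ (A := Aᵀ) (D := Dᵀ) (fun _ _ h => hA h)
    (fun _ _ h => hD h)
  rw [← transpose_blockDiag₂] at h
  exact fun _ _ hij => h hij

theorem det_blockDiag₂ [CommRing R] (A : Matrix (Fin m) (Fin m) R)
    (D : Matrix (Fin n) (Fin n) R) :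
    (blockDiag₂ A D).det = A.det * D.det := by
  rw [blockDiag₂, det_submatrix_equiv_self, det_fromBlocks_zero₂₁]

end BlockDiagonal

section LongestElement

variable {k : Type*} [Field k] {n : ℕ}

theorem w0_mul_apply (A : Matrix (Fin n) (Fin n) k) (i j : Fin n) :
    (w0 k n * A) i j = A i.rev j := by
  simp [w0, mul_apply, Finset.sum_ite_eq']

theorem mul_w0_apply (A : Matrix (Fin n) (Fin n) k) (i j : Fin n) :
    (A * w0 k n) i j = A i j.rev := by
  simp only [w0, mul_apply, of_apply, mul_ite, mul_one, mul_zero]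
  simp_rw [eq_comm (a := j), Fin.rev_eq_iff]
  simp

theorem w0_mul_w0 : w0 k n * w0 k n = 1 := by
  ext i j
  rw [w0_mul_apply]
  simp [w0, one_apply, eq_comm]

theorem Matrix.IsUpperTriangular.w0_mul_mul_w0 {A : Matrix (Fin n) (Fin n) k}
    (hA : A.IsUpperTriangular) :
    (w0 k n * A * w0 k n).IsLowerTriangular := fun i j hij => by
  rw [mul_w0_apply, w0_mul_apply]
  exact hA (Fin.rev_lt_rev.2 hij)

theorem blockM_mul (X g b : Matrix (Fin n) (Fin n) k) :
    blockM X (g * b) = blockDiag₂ 1 (w0 k n * b⁻¹ * w0 k n) * blockM X g * blockDiag₂ 1 b := by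
  have hlow : w0 k n * b⁻¹ * w0 k n * (w0 k n * g⁻¹) = w0 k n * (g * b)⁻¹ := by
    rw [Matrix.mul_inv_rev, Matrix.mul_assoc, ← Matrix.mul_assoc (w0 k n), w0_mul_w0,
      Matrix.one_mul, Matrix.mul_assoc]
  simp [blockM, blockDiag₂, submatrix_mul_equiv, fromBlocks_multiply, hlow]

end LongestElement

theorem isLowerTri_iff {k : Type*} [Field k] {m : ℕ} {M : Matrix (Fin m) (Fin m) k} :
    IsLowerTri M ↔ M.IsLowerTriangular :=
  ⟨fun h _ _ hij => h _ _ hij, fun h _ _ hij => h hij⟩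

theorem isUpperTri_iff {k : Type*} [Field k] {m : ℕ} {M : Matrix (Fin m) (Fin m) k} :
    IsUpperTri M ↔ M.IsUpperTriangular :=
  ⟨fun h _ _ hij => h _ _ hij, fun h _ _ hij => h hij⟩

theorem stmt_7_general {k : Type*} [Field k] {n : ℕ}
    (g g' b X : Matrix (Fin n) (Fin n) k)
    (hb : IsUnit b) (hbu : IsUpperTri b) (hgg : g' = g * b) :
    (∃ L U : Matrix (Fin (n + n)) (Fin (n + n)) k,
      IsUnit L ∧ IsLowerTri L ∧ IsUnit U ∧ IsUpperTri U ∧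
      blockM X g' = L * blockM X g * U) ∧
    (∀ (i j : ℕ) (hi : i ≤ n + n) (hj : j ≤ n + n),
      ((blockM X g').submatrix (Fin.castLE hi) (Fin.castLE hj)).rank =
      ((blockM X g).submatrix (Fin.castLE hi) (Fin.castLE hj)).rank) := by
  subst hgg
  have := hb.invertible
  have hbt : b.IsUpperTriangular := isUpperTri_iff.1 hbu
  have hw0 : IsUnit (w0 k n) := IsUnit.of_mul_eq_one _ w0_mul_w0
  have hbinv : b⁻¹.IsUpperTriangular := blockTriangular_inv_of_blockTriangular hbt
  set L := blockDiag₂ (1 : Matrix (Fin n) (Fin n) k) (w0 k n * b⁻¹ * w0 k n)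
  set U := blockDiag₂ (1 : Matrix (Fin n) (Fin n) k) b
  have hLt : L.IsLowerTriangular := isLowerTriangular_blockDiag₂ blockTriangular_one
    hbinv.w0_mul_mul_w0
  have hUt : U.IsUpperTriangular := isUpperTriangular_blockDiag₂ blockTriangular_one hbt
  have hL : IsUnit L.det := by
    rw [det_blockDiag₂, det_one, one_mul, ← isUnit_iff_isUnit_det]
    exact (hw0.mul (isUnit_nonsing_inv_iff.2 hb)).mul hw0
  have hU : IsUnit U.det := by
    rwa [det_blockDiag₂, det_one, one_mul, ← isUnit_iff_isUnit_det]
  refine ⟨⟨L, U, (isUnit_iff_isUnit_det L).2 hL, isLowerTri_iff.2 hLt,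
    (isUnit_iff_isUnit_det U).2 hU, isUpperTri_iff.2 hUt, blockM_mul X g b⟩, fun i j hi hj => ?_⟩
  rw [blockM_mul]
  exact rank_submatrix_castLE_lower_mul_mul_upper hLt hL hUt hU _ hi hj

/-- If `g' = g b` for an invertible upper triangular `b`, the block matrices
`[[X, g], [w₀ g⁻¹, 0]]` and `[[X, g'], [w₀ g'⁻¹, 0]]` lie in the same
`B⁻_{2n} × B_{2n}` double coset; equivalently, all their northwest submatrix
ranks agree. -/
theorem stmt_7 {k : Type*} [Field k] {n : ℕ}
    (g g' b X : Matrix (Fin n) (Fin n) k)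
    (hg : IsUnit g) (hb : IsUnit b) (hbu : IsUpperTri b) (hgg : g' = g * b) :
    (∃ L U : Matrix (Fin (n + n)) (Fin (n + n)) k,
      IsUnit L ∧ IsLowerTri L ∧ IsUnit U ∧ IsUpperTri U ∧
      blockM X g' = L * blockM X g * U) ∧
    (∀ (i j : ℕ) (hi : i ≤ n + n) (hj : j ≤ n + n),
      ((blockM X g').submatrix (Fin.castLE hi) (Fin.castLE hj)).rank =
      ((blockM X g).submatrix (Fin.castLE hi) (Fin.castLE hj)).rank) :=
  stmt_7_general g g' b X hb hbu hgg
end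

section
/- Let g ∈ GL_n(k), X ∈ Mat_n(k), let F^j denote the span of the first j columns of g, and let E_{n-i} denote the span of the last n−i standard basis vectors. Then for i ≤ n and j ≤ n, the rank of the top-left i × (n+j) submatrix of the block matrix [[X, g], [w₀ g⁻¹, 0]] equals rank(X : k^n → k^n/(E_{n-i} + F^j)) + j − dim(F^j ∩ E_{n-i}). -/
/-!
Since `i ≤ n`, the top-left `i × (n + j)` block only sees `X` and the first `j` columns of `g`,
restricted to the first `i` coordinates. Its column space is therefore the image of
`range X + F^j` under the projection `kⁿ → kⁱ`, whose kernel is `E_{n-i}`. Rank–nullity turns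
both sides into `dim (range X + F^j + E_{n-i})` minus a dimension, and Grassmann's formula for
`F^j` and `E_{n-i}`, together with `dim F^j = j` (the columns of `g` are independent), matches them.
-/

open Matrix

/-- `E_{n-i}` : the span of the last `n - i` standard basis vectors. -/
def Espan (k : Type*) [Field k] (n i : ℕ) : Submodule k (Fin n → k) :=
  Submodule.span k ((fun a : Fin n => (Pi.single a 1 : Fin n → k)) '' {a | i ≤ (a : ℕ)})

/-- `F^j` : the span of the first `j` columns of `g`. -/
def Fspan {k : Type*} [Field k] {n : ℕ} (g : Matrix (Fin n) (Fin n) k) (j : ℕ) :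
    Submodule k (Fin n → k) :=
  Submodule.span k ((fun c : Fin n => g.transpose c) '' {c | (c : ℕ) < j})

section RankLemmas

variable {R K : Type*}

theorem Matrix.span_range_col_submatrix [Semiring R] {m m' n n' : Type*}
    (M : Matrix m n R) (r : m' → m) {e : n' → n} (he : Function.Surjective e) :
    Submodule.span R (Set.range (M.submatrix r e).col) =
      (Submodule.span R (Set.range M.col)).map (LinearMap.funLeft R R r) := by
  rw [Submodule.map_span, ← Set.range_comp, ← he.range_comp]
  rfl

theorem Matrix.span_range_col_fromCols [Semiring R] {m n₁ n₂ : Type*}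
    (A₁ : Matrix m n₁ R) (A₂ : Matrix m n₂ R) :
    Submodule.span R (Set.range (fromCols A₁ A₂).col) =
      Submodule.span R (Set.range A₁.col) ⊔ Submodule.span R (Set.range A₂.col) := by
  have hcol : (fromCols A₁ A₂).col = Sum.elim A₁.col A₂.col := by
    ext (c | c) <;> rfl
  rw [hcol, Set.Sum.elim_range, Submodule.span_union]

theorem Submodule.finrank_map_add_finrank_ker [DivisionRing K] {V W : Type*}
    [AddCommGroup V] [Module K V] [AddCommGroup W] [Module K W] [FiniteDimensional K V]
    (f : V →ₗ[K] W) (p : Submodule K V) :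
    Module.finrank K (p.map f) + Module.finrank K (LinearMap.ker f) =
      Module.finrank K ↥(p ⊔ LinearMap.ker f) := by
  set q := p ⊔ LinearMap.ker f
  have hmap : q.map f = p.map f := by
    rw [Submodule.map_sup, LinearMap.le_ker_iff_map.mp le_rfl, sup_bot_eq]
  have hker : (LinearMap.ker (f.domRestrict q)) ≃ₗ[K] LinearMap.ker f := by
    rw [LinearMap.ker_domRestrict]
    exact Submodule.comapSubtypeEquivOfLe le_sup_right
  rw [← hmap, ← hker.finrank_eq, ← LinearMap.range_domRestrict,
    LinearMap.finrank_range_add_finrank_ker]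

end RankLemmas

section BlockRank

variable {k : Type*} [Field k] {n : ℕ}

theorem espan_eq_ker_funLeft {i : ℕ} (hi : i ≤ n) :
    Espan k n i = LinearMap.ker (LinearMap.funLeft k k (Fin.castLE hi)) := by
  ext v
  have hbasis : (fun a : Fin n => (Pi.single a 1 : Fin n → k)) = Pi.basisFun k (Fin n) := by
    ext a; simp
  rw [Espan, hbasis, Module.Basis.mem_span_image, LinearMap.mem_ker]
  simp only [Set.subset_def, Finset.mem_coe, Finsupp.mem_support_iff, Pi.basisFun_repr,
    Set.mem_ofPred_eq, funext_iff, LinearMap.funLeft_apply, Pi.zero_apply]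
  constructor
  · intro h c
    by_contra hc
    exact (h _ hc).not_gt c.isLt
  · intro h a ha
    by_contra hlt
    exact ha (h ⟨a, by omega⟩)

theorem fspan_eq_span_range_col (g : Matrix (Fin n) (Fin n) k) {j : ℕ} (hj : j ≤ n) :
    Fspan g j = Submodule.span k (Set.range (g.submatrix id (Fin.castLE hj)).col) := by
  rw [Fspan]
  congr 1
  ext v
  constructor
  · rintro ⟨c, hc, rfl⟩
    exact ⟨⟨c, hc⟩, rfl⟩
  · rintro ⟨c, rfl⟩
    exact ⟨Fin.castLE hj c, c.isLt, rfl⟩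

theorem finrank_fspan {g : Matrix (Fin n) (Fin n) k} (hg : IsUnit g) {j : ℕ} (hj : j ≤ n) :
    Module.finrank k (Fspan g j) = j := by
  have hli : LinearIndependent k (g.submatrix id (Fin.castLE hj)).col :=
    (Matrix.linearIndependent_cols_iff_isUnit.mpr hg).comp _ (Fin.castLE_injective hj)
  rw [fspan_eq_span_range_col g hj, finrank_span_eq_card hli, Fintype.card_fin]

theorem blockM_submatrix_castLE (X g : Matrix (Fin n) (Fin n) k) {i j : ℕ}
    (hi : i ≤ n) (hj : j ≤ n) :
    (blockM X g).submatrix (Fin.castLE (Nat.le_add_right_of_le hi))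
        (Fin.castLE (Nat.add_le_add_left hj n)) =
      (fromCols X (g.submatrix id (Fin.castLE hj))).submatrix (Fin.castLE hi)
        finSumFinEquiv.symm := by
  ext r c
  have hr : Fin.castLE (Nat.le_add_right_of_le hi) r = Fin.castAdd n (Fin.castLE hi r) := rfl
  induction c using Fin.addCases with
  | left c =>
    have hc : Fin.castLE (Nat.add_le_add_left hj n) (Fin.castAdd j c) = Fin.castAdd n c := rfl
    simp only [blockM, submatrix_apply, hr, hc, finSumFinEquiv_symm_apply_castAdd]
    rfl
  | right c =>
    have hc : Fin.castLE (Nat.add_le_add_left hj n) (Fin.natAdd n c) =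
        Fin.natAdd n (Fin.castLE hj c) := rfl
    simp only [blockM, submatrix_apply, hr, hc, finSumFinEquiv_symm_apply_castAdd,
      finSumFinEquiv_symm_apply_natAdd]
    rfl

theorem rank_blockM_submatrix_add_finrank_espan (X g : Matrix (Fin n) (Fin n) k) {i j : ℕ}
    (hi : i ≤ n) (hj : j ≤ n) :
    ((blockM X g).submatrix (Fin.castLE (Nat.le_add_right_of_le hi))
        (Fin.castLE (Nat.add_le_add_left hj n))).rank
        + Module.finrank k (Espan k n i) =
      Module.finrank k ↥(LinearMap.range X.mulVecLin ⊔ Fspan g j ⊔ Espan k n i) := by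
  rw [blockM_submatrix_castLE X g hi hj, Matrix.rank_eq_finrank_span_cols,
    Matrix.span_range_col_submatrix _ _ finSumFinEquiv.symm.surjective,
    Matrix.span_range_col_fromCols, ← Matrix.range_mulVecLin, ← fspan_eq_span_range_col g hj,
    espan_eq_ker_funLeft hi]
  exact Submodule.finrank_map_add_finrank_ker _ _

end BlockRank

/-- The rank of the top-left `i × (n+j)` submatrix of `[[X, g], [w₀ g⁻¹, 0]]` equals
`rank(X : kⁿ → kⁿ/(E_{n-i} + F^j)) + j − dim (F^j ∩ E_{n-i})`. -/
theorem stmt_9 {k : Type*} [Field k] {n : ℕ}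
    (g X : Matrix (Fin n) (Fin n) k) (hg : IsUnit g)
    (i j : ℕ) (hi : i ≤ n) (hj : j ≤ n) :
    ((blockM X g).submatrix (Fin.castLE (show i ≤ n + n by omega))
        (Fin.castLE (show n + j ≤ n + n by omega))).rank =
      Module.finrank k
        (LinearMap.range ((Espan k n i ⊔ Fspan g j).mkQ ∘ₗ X.mulVecLin)) + j
        - Module.finrank k ↥(Fspan g j ⊓ Espan k n i) := by
  have hblock := rank_blockM_submatrix_add_finrank_espan X g hi hj
  have hF : Module.finrank k (Fspan g j) = j := finrank_fspan hg hj
  set E := Espan k n i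
  set F := Fspan g j
  set S := LinearMap.range X.mulVecLin
  have hquot : Module.finrank k (LinearMap.range ((E ⊔ F).mkQ ∘ₗ X.mulVecLin))
      + Module.finrank k ↥(E ⊔ F) = Module.finrank k ↥(S ⊔ F ⊔ E) := by
    have h := Submodule.finrank_map_add_finrank_ker (E ⊔ F).mkQ S
    rwa [Submodule.ker_mkQ, ← sup_assoc, sup_right_comm S E F, ← LinearMap.range_comp] at h
  have hgrass := Submodule.finrank_sup_add_finrank_inf_eq F E
  rw [sup_comm] at hgrass
  omega
end

section
/- For π ∈ S_n, define v(π) ∈ S_{2n} as the permutation whose 2n×2n permutation matrix is the block matrix [[0, π],[w₀π⁻¹, 0]]. Then the Coxeter length of v(π) equals n(n−1)/2 + n², independently of π. -/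
/-- `v(π) ∈ S_{2n}` : the permutation whose matrix is the `2n × 2n` block matrix
`[[0, P(π)], [P(w₀) P(π)⁻¹, 0]]`; it sends (in block form) `inl j ↦ inr (w₀ (π⁻¹ j))`
and `inr j ↦ inl (π j)`. -/
def vperm {n : ℕ} (π : Equiv.Perm (Fin n)) : Equiv.Perm (Fin (n + n)) :=
  (finSumFinEquiv.symm.trans
    (((Equiv.sumCongr ((π.symm : Equiv.Perm (Fin n)).trans (Fin.revPerm))
        (π : Equiv.Perm (Fin n))).trans
      (Equiv.sumComm (Fin n) (Fin n))))).trans finSumFinEquiv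

lemma vperm_castAdd {n : ℕ} (π : Equiv.Perm (Fin n)) (i : Fin n) :
    vperm π (Fin.castAdd n i) = Fin.natAdd n (Fin.rev (π.symm i)) := by
  simp only [vperm, Equiv.trans_apply, finSumFinEquiv_symm_apply_castAdd,
    Equiv.sumCongr_apply, Sum.map_inl, Equiv.sumComm_apply, Sum.swap_inl,
    finSumFinEquiv_apply_right, Function.comp_apply, Fin.revPerm_apply]

lemma vperm_natAdd {n : ℕ} (π : Equiv.Perm (Fin n)) (i : Fin n) :
    vperm π (Fin.natAdd n i) = Fin.castAdd n (π i) := by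
  simp only [vperm, Equiv.trans_apply, finSumFinEquiv_symm_apply_natAdd,
    Equiv.sumCongr_apply, Sum.map_inr, Equiv.sumComm_apply, Sum.swap_inr,
    finSumFinEquiv_apply_left]

lemma lt_cc {n : ℕ} {a b : Fin n} : Fin.castAdd n a < Fin.castAdd n b ↔ a < b := by
  rw [Fin.lt_def, Fin.coe_castAdd, Fin.coe_castAdd, Fin.lt_def]

lemma lt_nn {n : ℕ} {a b : Fin n} : Fin.natAdd n a < Fin.natAdd n b ↔ a < b := by
  rw [Fin.lt_def, Fin.coe_natAdd, Fin.coe_natAdd, Fin.lt_def]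
  omega

lemma lt_cn {n : ℕ} (a b : Fin n) : Fin.castAdd n a < Fin.natAdd n b := by
  have := a.isLt
  rw [Fin.lt_def, Fin.coe_castAdd, Fin.coe_natAdd]
  omega

lemma not_lt_nc {n : ℕ} (a b : Fin n) : ¬ Fin.natAdd n a < Fin.castAdd n b := by
  have := b.isLt
  rw [Fin.lt_def, Fin.coe_castAdd, Fin.coe_natAdd]
  omega

/-- The number of inversions of `v(π)` is `n(n-1)/2 + n²`, independent of `π ∈ S_n`. -/
theorem stmt_11 {n : ℕ} (π : Equiv.Perm (Fin n)) :
    {p : Fin (n + n) × Fin (n + n) |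
        p.1 < p.2 ∧ vperm π p.2 < vperm π p.1}.ncard =
      n * (n - 1) / 2 + n * n := by
  classical
  have hset : {p : Fin (n + n) × Fin (n + n) | p.1 < p.2 ∧ vperm π p.2 < vperm π p.1}
      = ↑((Finset.univ : Finset (Fin (n+n) × Fin (n+n))).filter
          fun p => p.1 < p.2 ∧ vperm π p.2 < vperm π p.1) := by
    ext p; simp
  rw [hset, Set.ncard_coe_finset, Finset.card_filter]
  have key : ∀ f : Fin (n+n) → ℕ, ∑ x, f x
      = ∑ a : Fin n, f (Fin.castAdd n a) + ∑ a : Fin n, f (Fin.natAdd n a) := by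
    intro f
    rw [← Equiv.sum_comp finSumFinEquiv f, Fintype.sum_sum_type]
    simp only [finSumFinEquiv_apply_left, finSumFinEquiv_apply_right]
  rw [Fintype.sum_prod_type]
  rw [key (fun a => ∑ b, if a < b ∧ vperm π b < vperm π a then 1 else 0)]
  have e1 : ∀ a : Fin n,
      (∑ b, if Fin.castAdd n a < b ∧ vperm π b < vperm π (Fin.castAdd n a) then 1 else 0)
      = (∑ j : Fin n, if a < j ∧ π.symm a < π.symm j then 1 else 0) + n := by
    intro a
    rw [key]
    congr 1
    · refine Finset.sum_congr rfl fun j _ => ?_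
      rw [vperm_castAdd, vperm_castAdd]
      refine if_congr ?_ rfl rfl
      rw [lt_cc, lt_nn, Fin.rev_lt_rev]
    · have h1 : ∀ j : Fin n,
          (if Fin.castAdd n a < Fin.natAdd n j ∧
              vperm π (Fin.natAdd n j) < vperm π (Fin.castAdd n a) then 1 else 0) = 1 := by
        intro j
        rw [vperm_castAdd, vperm_natAdd]
        exact if_pos ⟨lt_cn _ _, lt_cn _ _⟩
      rw [Finset.sum_congr rfl fun j _ => h1 j, Finset.sum_const, Finset.card_univ,
        Fintype.card_fin, smul_eq_mul, mul_one]
  have e2 : ∀ a : Fin n,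
      (∑ b, if Fin.natAdd n a < b ∧ vperm π b < vperm π (Fin.natAdd n a) then 1 else 0)
      = ∑ j : Fin n, if a < j ∧ π j < π a then 1 else 0 := by
    intro a
    rw [key]
    have h0 : ∀ j : Fin n,
        (if Fin.natAdd n a < Fin.castAdd n j ∧
            vperm π (Fin.castAdd n j) < vperm π (Fin.natAdd n a) then 1 else 0) = 0 := by
      intro j
      exact if_neg fun hc => not_lt_nc _ _ hc.1
    rw [Finset.sum_congr rfl fun j _ => h0 j, Finset.sum_const_zero, zero_add]
    refine Finset.sum_congr rfl fun j _ => ?_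
    rw [vperm_natAdd, vperm_natAdd]
    refine if_congr ?_ rfl rfl
    rw [lt_nn, lt_cc]
  simp only [e1, e2]
  rw [Finset.sum_add_distrib, Finset.sum_const, Finset.card_univ, Fintype.card_fin,
    smul_eq_mul]
  have reindex : (∑ a : Fin n, ∑ j : Fin n, if a < j ∧ π.symm a < π.symm j then 1 else 0)
      = ∑ x : Fin n, ∑ y : Fin n, if π x < π y ∧ x < y then 1 else 0 := by
    rw [← Equiv.sum_comp π (fun a => ∑ j : Fin n, if a < j ∧ π.symm a < π.symm j then 1 else 0)]
    refine Finset.sum_congr rfl fun x _ => ?_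
    rw [← Equiv.sum_comp π (fun j => if π x < j ∧ π.symm (π x) < π.symm j then 1 else 0)]
    simp only [Equiv.symm_apply_apply]
  rw [reindex]
  have hpt : ∀ x y : Fin n,
      ((if π x < π y ∧ x < y then 1 else 0) + (if x < y ∧ π y < π x then 1 else 0))
      = if x < y then (1:ℕ) else 0 := by
    intro x y
    by_cases h : x < y
    · have hne : π x ≠ π y := fun he => absurd (π.injective he) h.ne
      rcases hne.lt_or_gt with h1 | h1
      · rw [if_pos ⟨h1, h⟩, if_neg fun hc => asymm h1 hc.2, if_pos h]
      · rw [if_neg fun hc => asymm h1 hc.1, if_pos ⟨h, h1⟩, if_pos h]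
    · rw [if_neg fun hc => h hc.2, if_neg fun hc => h hc.1, if_neg h]
  have comb : (∑ x : Fin n, ∑ y : Fin n, if π x < π y ∧ x < y then 1 else 0)
      + (∑ x : Fin n, ∑ y : Fin n, if x < y ∧ π y < π x then 1 else 0)
      = ∑ x : Fin n, ∑ y : Fin n, if x < y then (1:ℕ) else 0 := by
    rw [← Finset.sum_add_distrib]
    refine Finset.sum_congr rfl fun x _ => ?_
    rw [← Finset.sum_add_distrib]
    exact Finset.sum_congr rfl fun y _ => hpt x y
  have count_lt : ∀ y : Fin n, (∑ x : Fin n, if x < y then (1:ℕ) else 0) = y.val := by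
    intro y
    have h1 : ∀ x : Fin n, (if x < y then (1:ℕ) else 0) = if x.val < y.val then 1 else 0 :=
      fun x => if_congr Fin.lt_def rfl rfl
    rw [Finset.sum_congr rfl fun x _ => h1 x]
    rw [Fin.sum_univ_eq_sum_range (fun i => if i < y.val then (1:ℕ) else 0)]
    rw [Finset.sum_ite, Finset.sum_const_zero, add_zero, Finset.sum_const, smul_eq_mul, mul_one]
    have h2 : (Finset.range n).filter (fun i => i < y.val) = Finset.range y.val := by
      ext i
      simp only [Finset.mem_filter, Finset.mem_range]
      have := y.isLt
      omega
    rw [h2, Finset.card_range]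
  have gauss : (∑ x : Fin n, ∑ y : Fin n, if x < y then (1:ℕ) else 0) = n * (n - 1) / 2 := by
    rw [Finset.sum_comm]
    rw [Finset.sum_congr rfl fun y _ => count_lt y]
    rw [Fin.sum_univ_eq_sum_range (fun i => i)]
    exact Finset.sum_range_id n
  omega
end

section
/- For every n×n partial permutation matrix ρ, there exists a unique σ ∈ S_{2n} whose bottom-right n×n submatrix equals ρ and such that σ(i) < σ(i+1) and σ⁻¹(i) < σ⁻¹(i+1) for all i ∈ {1,…,n−1}. -/
/-- `σ`, `σ⁻¹` have no descent in positions `1, …, n-1` (1-indexed), i.e.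
`σ(i) < σ(i+1)` and `σ⁻¹(i) < σ⁻¹(i+1)` for those positions. -/
def NoSmallDescents (n : ℕ) (σ : Equiv.Perm (Fin (n + n))) : Prop :=
  ∀ i j : Fin (n + n), (j : ℕ) = (i : ℕ) + 1 → (j : ℕ) < n →
    σ i < σ j ∧ σ.symm i < σ.symm j

namespace PPaux

variable {n : ℕ}

def Cset (ρ : Fin n → Fin n → Bool) : Finset (Fin n) :=
  Finset.univ.filter fun j => ∃ i, ρ i j = true

abbrev swapρ (ρ : Fin n → Fin n → Bool) : Fin n → Fin n → Bool := fun i j => ρ j i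

def Rset (ρ : Fin n → Fin n → Bool) : Finset (Fin n) := Cset (swapρ ρ)

lemma mem_Cset {ρ : Fin n → Fin n → Bool} {j : Fin n} :
    j ∈ Cset ρ ↔ ∃ i, ρ i j = true := by simp [Cset]

lemma mem_Rset {ρ : Fin n → Fin n → Bool} {i : Fin n} :
    i ∈ Rset ρ ↔ ∃ j, ρ i j = true := by simp [Rset, Cset, swapρ]

noncomputable def row (ρ : Fin n → Fin n → Bool) (j : Fin n) : Fin n :=
  if h : ∃ i, ρ i j = true then h.choose else j

noncomputable def col (ρ : Fin n → Fin n → Bool) (i : Fin n) : Fin n :=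
  row (swapρ ρ) i

lemma row_spec {ρ : Fin n → Fin n → Bool} {j : Fin n} (h : j ∈ Cset ρ) :
    ρ (row ρ j) j = true := by
  rw [mem_Cset] at h
  rw [row, dif_pos h]
  exact h.choose_spec

lemma col_spec {ρ : Fin n → Fin n → Bool} {i : Fin n} (h : i ∈ Rset ρ) :
    ρ i (col ρ i) = true :=
  row_spec (ρ := swapρ ρ) h

lemma row_eq {ρ : Fin n → Fin n → Bool}
    (hcol : ∀ i i' j, ρ i j = true → ρ i' j = true → i = i')
    {i j : Fin n} (h : ρ i j = true) : row ρ j = i :=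
  hcol _ _ _ (row_spec (mem_Cset.2 ⟨i, h⟩)) h

lemma col_eq {ρ : Fin n → Fin n → Bool}
    (hrow : ∀ i j j', ρ i j = true → ρ i j' = true → j = j')
    {i j : Fin n} (h : ρ i j = true) : col ρ i = j :=
  row_eq (ρ := swapρ ρ) (fun a b c h1 h2 => hrow c a b h1 h2) h

lemma card_RC (ρ : Fin n → Fin n → Bool)
    (hrow : ∀ i j j', ρ i j = true → ρ i j' = true → j = j')
    (hcol : ∀ i i' j, ρ i j = true → ρ i' j = true → i = i') :
    (Rset ρ).card = (Cset ρ).card := by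
  refine (Finset.card_bij (fun j _ => row ρ j) ?_ ?_ ?_).symm
  · intro j hj
    exact mem_Rset.2 ⟨j, row_spec hj⟩
  · intro j hj j' hj' he
    exact hrow _ _ _ (he ▸ row_spec hj) (row_spec hj')
  · intro i hi
    refine ⟨col ρ i, mem_Cset.2 ⟨i, col_spec hi⟩, row_eq hcol (col_spec hi)⟩

lemma card_Cset_le (ρ : Fin n → Fin n → Bool) : (Cset ρ).card ≤ n := by
  simpa using Finset.card_le_card (Finset.subset_univ (Cset ρ))

lemma card_Cc (ρ : Fin n → Fin n → Bool) : ((Cset ρ)ᶜ).card = n - (Cset ρ).card := by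
  simp [Finset.card_compl]

/-- The forward map on `Fin n ⊕ Fin n` (positions to values). -/
noncomputable def F (ρ : Fin n → Fin n → Bool)
    (hk : (Rset ρ).card = (Cset ρ).card) : Fin n ⊕ Fin n → Fin n ⊕ Fin n :=
  Sum.elim
    (fun p =>
      if h : (p : ℕ) < (Cset ρ).card then Sum.inl p
      else Sum.inr ((Rset ρ)ᶜ.orderEmbOfFin rfl
        ⟨(p : ℕ) - (Cset ρ).card, by
          have h1 := card_Cc (swapρ ρ)
          have h2 := card_Cset_le ρ
          have h3 := p.isLt
          show (p : ℕ) - (Cset ρ).card < ((Rset ρ)ᶜ).card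
          rw [show ((Rset ρ)ᶜ).card = n - (Rset ρ).card from h1, hk]
          omega⟩))
    (fun j =>
      if h : j ∈ Cset ρ then Sum.inr (row ρ j)
      else Sum.inl ⟨(Cset ρ).card
          + (((Cset ρ)ᶜ.orderIsoOfFin rfl).symm ⟨j, Finset.mem_compl.2 h⟩ : Fin _), by
        have h1 := card_Cc ρ
        have h2 := (((Cset ρ)ᶜ.orderIsoOfFin rfl).symm ⟨j, Finset.mem_compl.2 h⟩).isLt
        omega⟩)

lemma F_inl_low {ρ : Fin n → Fin n → Bool} {hk} {p : Fin n}
    (h : (p : ℕ) < (Cset ρ).card) : F ρ hk (Sum.inl p) = Sum.inl p := by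
  simp [F, dif_pos h]

lemma F_inl_high {ρ : Fin n → Fin n → Bool} {hk} {p : Fin n}
    (h : ¬ (p : ℕ) < (Cset ρ).card) :
    ∃ pf, F ρ hk (Sum.inl p)
      = Sum.inr ((Rset ρ)ᶜ.orderEmbOfFin rfl ⟨(p : ℕ) - (Cset ρ).card, pf⟩) := by
  refine ⟨?_, by simp [F, dif_neg h]⟩
  have h1 := card_Cc (swapρ ρ)
  have h2 := card_Cset_le ρ
  have h3 := p.isLt
  show (p : ℕ) - (Cset ρ).card < ((Rset ρ)ᶜ).card
  rw [show ((Rset ρ)ᶜ).card = n - (Rset ρ).card from h1, hk]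
  omega

lemma F_inr_pos {ρ : Fin n → Fin n → Bool} {hk} {j : Fin n}
    (h : j ∈ Cset ρ) : F ρ hk (Sum.inr j) = Sum.inr (row ρ j) := by
  simp [F, dif_pos h]

lemma F_inr_neg {ρ : Fin n → Fin n → Bool} {hk} {j : Fin n}
    (h : j ∉ Cset ρ) :
    ∃ pf, F ρ hk (Sum.inr j) = Sum.inl ⟨(Cset ρ).card
      + (((Cset ρ)ᶜ.orderIsoOfFin rfl).symm ⟨j, Finset.mem_compl.2 h⟩ : Fin _), pf⟩ := by
  refine ⟨?_, by simp [F, dif_neg h]⟩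
  have h1 := card_Cc ρ
  have h2 := (((Cset ρ)ᶜ.orderIsoOfFin rfl).symm ⟨j, Finset.mem_compl.2 h⟩).isLt
  omega


lemma orderIso_symm_emb {α : Type*} [LinearOrder α] (s : Finset α) (t : Fin s.card)
    (hm : s.orderEmbOfFin rfl t ∈ s) :
    (s.orderIsoOfFin rfl).symm ⟨s.orderEmbOfFin rfl t, hm⟩ = t := by
  have h : (⟨s.orderEmbOfFin rfl t, hm⟩ : {x // x ∈ s}) = s.orderIsoOfFin rfl t :=
    Subtype.ext (s.coe_orderIsoOfFin_apply rfl t).symm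
  rw [h, OrderIso.symm_apply_apply]

lemma emb_orderIso_symm {α : Type*} [LinearOrder α] (s : Finset α) (x : {a // a ∈ s}) :
    s.orderEmbOfFin rfl ((s.orderIsoOfFin rfl).symm x) = ↑x := by
  rw [← s.coe_orderIsoOfFin_apply rfl, OrderIso.apply_symm_apply]

lemma FF (ρ : Fin n → Fin n → Bool)
    (hrow : ∀ i j j', ρ i j = true → ρ i j' = true → j = j')
    (hk : (Rset ρ).card = (Cset ρ).card)
    (hk' : (Rset (swapρ ρ)).card = (Cset (swapρ ρ)).card) :
    ∀ x, F (swapρ ρ) hk' (F ρ hk x) = x := by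
  have e1 : (Cset (swapρ ρ)).card = (Cset ρ).card := hk
  intro x
  match x with
  | .inl p =>
    by_cases h : (p : ℕ) < (Cset ρ).card
    · rw [F_inl_low h, F_inl_low (by rw [e1]; exact h)]
    · obtain ⟨pf, hF⟩ := F_inl_high (hk := hk) h
      rw [hF]
      have hmem := Finset.orderEmbOfFin_mem ((Rset ρ)ᶜ) rfl ⟨(p : ℕ) - (Cset ρ).card, pf⟩
      have hi : ((Rset ρ)ᶜ.orderEmbOfFin rfl ⟨(p : ℕ) - (Cset ρ).card, pf⟩) ∉ Cset (swapρ ρ) :=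
        Finset.mem_compl.1 hmem
      obtain ⟨pf2, hF2⟩ := F_inr_neg (hk := hk') hi
      rw [hF2]
      have hr : (((Rset ρ)ᶜ.orderIsoOfFin rfl).symm
          ⟨(Rset ρ)ᶜ.orderEmbOfFin rfl ⟨(p : ℕ) - (Cset ρ).card, pf⟩,
            Finset.mem_compl.2 hi⟩ : ℕ) = (p : ℕ) - (Cset ρ).card := by
        rw [orderIso_symm_emb]
      refine congrArg Sum.inl (Fin.ext ?_)
      show (Cset (swapρ ρ)).card + (((Rset ρ)ᶜ.orderIsoOfFin rfl).symm
          ⟨(Rset ρ)ᶜ.orderEmbOfFin rfl ⟨(p : ℕ) - (Cset ρ).card, pf⟩,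
            Finset.mem_compl.2 hi⟩ : ℕ) = (p : ℕ)
      rw [hr, e1]
      omega
  | .inr j =>
    by_cases h : j ∈ Cset ρ
    · rw [F_inr_pos h, F_inr_pos (show row ρ j ∈ Cset (swapρ ρ) from mem_Rset.2 ⟨j, row_spec h⟩)]
      exact congrArg Sum.inr (col_eq hrow (row_spec h))
    · obtain ⟨pf, hF⟩ := F_inr_neg (hk := hk) h
      rw [hF]
      have h2 : ¬ ((⟨(Cset ρ).card
          + (((Cset ρ)ᶜ.orderIsoOfFin rfl).symm ⟨j, Finset.mem_compl.2 h⟩ : Fin _), pf⟩ : Fin n) : ℕ)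
          < (Cset (swapρ ρ)).card := by
        rw [e1]; simp
      obtain ⟨pf2, hF2⟩ := F_inl_high (hk := hk') h2
      rw [hF2]
      refine congrArg Sum.inr ?_
      have hidx : (⟨((⟨(Cset ρ).card
          + (((Cset ρ)ᶜ.orderIsoOfFin rfl).symm ⟨j, Finset.mem_compl.2 h⟩ : Fin _), pf⟩ : Fin n) : ℕ)
            - (Cset (swapρ ρ)).card, pf2⟩ : Fin ((Rset (swapρ ρ))ᶜ.card))
          = (((Cset ρ)ᶜ.orderIsoOfFin rfl).symm ⟨j, Finset.mem_compl.2 h⟩ : Fin _) := by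
        apply Fin.ext
        show ((Cset ρ).card + _) - (Cset (swapρ ρ)).card = _
        rw [e1]
        omega
      rw [hidx]
      exact emb_orderIso_symm (Cset ρ)ᶜ ⟨j, Finset.mem_compl.2 h⟩


lemma swap_hrow {ρ : Fin n → Fin n → Bool}
    (hcol : ∀ i i' j, ρ i j = true → ρ i' j = true → i = i') :
    ∀ i j j', swapρ ρ i j = true → swapρ ρ i j' = true → j = j' :=
  fun i j j' h h' => hcol j j' i h h'

lemma swap_hcol {ρ : Fin n → Fin n → Bool}
    (hrow : ∀ i j j', ρ i j = true → ρ i j' = true → j = j') :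
    ∀ i i' j, swapρ ρ i j = true → swapρ ρ i' j = true → i = i' :=
  fun i i' j h h' => hrow j i i' h h'

/-- The canonical permutation associated with `ρ`. -/
noncomputable def sigma (ρ : Fin n → Fin n → Bool)
    (hrow : ∀ i j j', ρ i j = true → ρ i j' = true → j = j')
    (hcol : ∀ i i' j, ρ i j = true → ρ i' j = true → i = i')
    (hk : (Rset ρ).card = (Cset ρ).card)
    (hk' : (Rset (swapρ ρ)).card = (Cset (swapρ ρ)).card) :
    Equiv.Perm (Fin (n + n)) :=
  finSumFinEquiv.symm.trans
    ((Equiv.mk (F ρ hk) (F (swapρ ρ) hk')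
      (FF ρ hrow hk hk') (FF (swapρ ρ) (swap_hrow hcol) hk' hk)).trans finSumFinEquiv)

lemma sigma_apply {ρ : Fin n → Fin n → Bool} {hrow hcol hk hk'} (x : Fin n ⊕ Fin n) :
    sigma ρ hrow hcol hk hk' (finSumFinEquiv x) = finSumFinEquiv (F ρ hk x) := by
  simp [sigma]

lemma sigma_symm_apply {ρ : Fin n → Fin n → Bool} {hrow hcol hk hk'} (x : Fin n ⊕ Fin n) :
    (sigma ρ hrow hcol hk hk').symm (finSumFinEquiv x) = finSumFinEquiv (F (swapρ ρ) hk' x) := by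
  simp [sigma]

lemma emb_inl_val (p : Fin n) : ((finSumFinEquiv (Sum.inl p) : Fin (n + n)) : ℕ) = (p : ℕ) := by
  simp

lemma emb_inr_val (j : Fin n) :
    ((finSumFinEquiv (Sum.inr j) : Fin (n + n)) : ℕ) = n + (j : ℕ) := by
  simp
  omega

/-- `F` is strictly monotone on the `inl` part (values as elements of `Fin (n+n)`). -/
lemma F_mono {ρ : Fin n → Fin n → Bool} {hk} {p q : Fin n} (hpq : (p : ℕ) < (q : ℕ)) :
    ((finSumFinEquiv (F ρ hk (Sum.inl p)) : Fin (n + n)) : ℕ)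
      < ((finSumFinEquiv (F ρ hk (Sum.inl q)) : Fin (n + n)) : ℕ) := by
  by_cases hq : (q : ℕ) < (Cset ρ).card
  · have hp : (p : ℕ) < (Cset ρ).card := lt_trans hpq hq
    rw [F_inl_low hp, F_inl_low hq, emb_inl_val, emb_inl_val]
    exact hpq
  · obtain ⟨pfq, hFq⟩ := F_inl_high (hk := hk) hq
    rw [hFq, emb_inr_val]
    by_cases hp : (p : ℕ) < (Cset ρ).card
    · rw [F_inl_low hp, emb_inl_val]
      have := p.isLt
      omega
    · obtain ⟨pfp, hFp⟩ := F_inl_high (hk := hk) hp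
      rw [hFp, emb_inr_val]
      have hmono := ((Rset ρ)ᶜ.orderEmbOfFin rfl).strictMono
        (show (⟨(p : ℕ) - (Cset ρ).card, pfp⟩ : Fin _) < ⟨(q : ℕ) - (Cset ρ).card, pfq⟩ by
          simp [Fin.lt_def]; omega)
      have : ((Rset ρ)ᶜ.orderEmbOfFin rfl ⟨(p : ℕ) - (Cset ρ).card, pfp⟩ : ℕ)
          < ((Rset ρ)ᶜ.orderEmbOfFin rfl ⟨(q : ℕ) - (Cset ρ).card, pfq⟩ : ℕ) := hmono
      omega

/-- the chain lemma: adjacent increases give full monotonicity on the first `n` positions. -/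
lemma chain (f : Fin (n + n) → Fin (n + n))
    (hadj : ∀ i j : Fin (n + n), (j : ℕ) = (i : ℕ) + 1 → (j : ℕ) < n → f i < f j) :
    ∀ i j : Fin (n + n), (i : ℕ) < (j : ℕ) → (j : ℕ) < n → f i < f j := by
  suffices H : ∀ m, ∀ i j : Fin (n + n), (j : ℕ) = m → (i : ℕ) < (j : ℕ) → (j : ℕ) < n → f i < f j by
    exact fun i j h1 h2 => H (j : ℕ) i j rfl h1 h2
  intro m
  induction m with
  | zero => intro i j hj hij hjn; omega
  | succ m ih =>
    intro i j hj hij hjn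
    rcases Nat.lt_or_ge (i : ℕ) m with hi | hi
    · have hmn : m < n + n := by omega
      have := ih i ⟨m, hmn⟩ rfl (by simpa using hi) (by simp; omega)
      exact lt_trans this (hadj ⟨m, hmn⟩ j (by simp [hj]) hjn)
    · have : (i : ℕ) = m := by omega
      exact hadj i j (by omega) hjn

lemma le_self_of_chain (f : Fin (n + n) → Fin (n + n))
    (hadj : ∀ i j : Fin (n + n), (j : ℕ) = (i : ℕ) + 1 → (j : ℕ) < n → f i < f j) :
    ∀ x : Fin (n + n), (x : ℕ) < n → (x : ℕ) ≤ (f x : ℕ) := by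
  suffices H : ∀ m, ∀ x : Fin (n + n), (x : ℕ) = m → (x : ℕ) < n → m ≤ (f x : ℕ) by
    exact fun x hx => H (x : ℕ) x rfl hx
  intro m
  induction m with
  | zero => intro x hx hxn; omega
  | succ m ih =>
    intro x hx hxn
    have hmn : m < n + n := by omega
    have h1 := ih ⟨m, hmn⟩ rfl (by simp only [Fin.val_mk]; omega)
    have h2 : f ⟨m, hmn⟩ < f x := hadj ⟨m, hmn⟩ x (by simp only [Fin.val_mk]; omega) (by omega)
    rw [Fin.lt_def] at h2
    omega


lemma sigma_block {ρ : Fin n → Fin n → Bool} {hrow hcol hk hk'} (i j : Fin n) :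
    sigma ρ hrow hcol hk hk' (finSumFinEquiv (Sum.inr j)) = finSumFinEquiv (Sum.inr i)
      ↔ ρ i j = true := by
  rw [sigma_apply, Equiv.apply_eq_iff_eq]
  by_cases h : j ∈ Cset ρ
  · rw [F_inr_pos h]
    simp only [Sum.inr.injEq]
    constructor
    · rintro rfl; exact row_spec h
    · intro hij; exact row_eq hcol hij
  · obtain ⟨pf, hF⟩ := F_inr_neg (hk := hk) h
    rw [hF]
    constructor
    · intro hc; exact absurd hc (by simp)
    · intro hij; exact absurd (mem_Cset.2 ⟨i, hij⟩) h

lemma emb_of_lt {x : Fin (n + n)} (h : (x : ℕ) < n) :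
    x = finSumFinEquiv (Sum.inl ⟨(x : ℕ), h⟩) := by
  apply Fin.ext
  rw [emb_inl_val]

lemma emb_of_ge {x : Fin (n + n)} (h : n ≤ (x : ℕ)) :
    x = finSumFinEquiv (Sum.inr ⟨(x : ℕ) - n, by have := x.isLt; omega⟩) := by
  apply Fin.ext
  rw [emb_inr_val]
  simp only [Fin.val_mk]
  omega

lemma sigma_nsd {ρ : Fin n → Fin n → Bool} {hrow hcol hk hk'} :
    ∀ i j : Fin (n + n), (j : ℕ) = (i : ℕ) + 1 → (j : ℕ) < n →
      sigma ρ hrow hcol hk hk' i < sigma ρ hrow hcol hk hk' j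
        ∧ (sigma ρ hrow hcol hk hk').symm i < (sigma ρ hrow hcol hk hk').symm j := by
  intro i j hji hjn
  have hin : (i : ℕ) < n := by omega
  rw [emb_of_lt hin, emb_of_lt hjn]
  constructor
  · rw [sigma_apply, sigma_apply, Fin.lt_def]
    exact F_mono (by simp; omega)
  · rw [sigma_symm_apply, sigma_symm_apply, Fin.lt_def]
    exact F_mono (by simp; omega)


def toIdx (x : Fin (n + n)) : Fin n :=
  ⟨(x : ℕ) % n, by have := x.isLt; exact Nat.mod_lt _ (by omega)⟩

lemma toIdx_val_low {x : Fin (n + n)} (h : (x : ℕ) < n) : ((toIdx x) : ℕ) = (x : ℕ) :=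
  Nat.mod_eq_of_lt h

lemma toIdx_val_high {x : Fin (n + n)} (h : n ≤ (x : ℕ)) : ((toIdx x) : ℕ) = (x : ℕ) - n := by
  show (x : ℕ) % n = _
  rw [Nat.mod_eq_sub_mod h]
  exact Nat.mod_eq_of_lt (by have := x.isLt; omega)

lemma emb_toIdx_low {x : Fin (n + n)} (h : (x : ℕ) < n) :
    finSumFinEquiv (Sum.inl (toIdx x)) = x := by
  apply Fin.ext; rw [emb_inl_val, toIdx_val_low h]

lemma emb_toIdx_high {x : Fin (n + n)} (h : n ≤ (x : ℕ)) :
    finSumFinEquiv (Sum.inr (toIdx x)) = x := by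
  apply Fin.ext; rw [emb_inr_val, toIdx_val_high h]; have := x.isLt; omega

def posIdx (ρ : Fin n → Fin n → Bool) (hk : (Rset ρ).card = (Cset ρ).card)
    (t : Fin (((Rset ρ)ᶜ).card)) : Fin n :=
  ⟨(Cset ρ).card + (t : ℕ), by
    have h1 : ((Rset ρ)ᶜ).card = n - (Rset ρ).card := card_Cc (swapρ ρ)
    have := t.isLt
    have := card_Cset_le ρ
    omega⟩

lemma posIdx_val {ρ : Fin n → Fin n → Bool} {hk} (t : Fin (((Rset ρ)ᶜ).card)) :
    ((posIdx ρ hk t) : ℕ) = (Cset ρ).card + (t : ℕ) := rfl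

lemma uniq_inl (ρ : Fin n → Fin n → Bool)
    (hk : (Rset ρ).card = (Cset ρ).card)
    (τ : Equiv.Perm (Fin (n + n)))
    (hb : ∀ i j : Fin n,
      τ (finSumFinEquiv (Sum.inr j)) = finSumFinEquiv (Sum.inr i) ↔ ρ i j = true)
    (h1 : ∀ a b : Fin (n + n), (a : ℕ) < (b : ℕ) → (b : ℕ) < n → τ a < τ b)
    (h2 : ∀ a b : Fin (n + n), (a : ℕ) < (b : ℕ) → (b : ℕ) < n → τ.symm a < τ.symm b) :
    ∀ p : Fin n, τ (finSumFinEquiv (Sum.inl p)) = finSumFinEquiv (F ρ hk (Sum.inl p)) := by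
  classical
  have hkn := card_Cset_le ρ
  have hle1 : ∀ x : Fin (n + n), (x : ℕ) < n → (x : ℕ) ≤ (τ x : ℕ) :=
    le_self_of_chain _ (fun i j hji hjn => h1 i j (by omega) hjn)
  have hle2 : ∀ x : Fin (n + n), (x : ℕ) < n → (x : ℕ) ≤ (τ.symm x : ℕ) :=
    le_self_of_chain _ (fun i j hji hjn => h2 i j (by omega) hjn)
  have hfix : ∀ q : Fin n, ((τ (finSumFinEquiv (Sum.inl q)) : Fin (n + n)) : ℕ) < n →
      τ (finSumFinEquiv (Sum.inl q)) = finSumFinEquiv (Sum.inl q) := by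
    intro q hq
    have hqv : ((finSumFinEquiv (Sum.inl q) : Fin (n + n)) : ℕ) = (q : ℕ) := emb_inl_val q
    have l1 := hle1 (finSumFinEquiv (Sum.inl q)) (by rw [hqv]; exact q.isLt)
    have l2 := hle2 (τ (finSumFinEquiv (Sum.inl q))) hq
    rw [Equiv.symm_apply_apply] at l2
    apply Fin.ext
    omega
  set A : Finset (Fin n) :=
    Finset.univ.filter
      (fun q => ((τ (finSumFinEquiv (Sum.inl q)) : Fin (n + n)) : ℕ) < n) with hA
  have hmemA : ∀ q : Fin n, q ∈ A ↔ ((τ (finSumFinEquiv (Sum.inl q))) : ℕ) < n := by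
    intro q; rw [hA]; simp only [Finset.mem_filter, Finset.mem_univ, true_and]
  have hAfix : ∀ q ∈ A, τ (finSumFinEquiv (Sum.inl q)) = finSumFinEquiv (Sum.inl q) :=
    fun q hq => hfix q ((hmemA q).1 hq)
  have hdc : ∀ q q' : Fin n, (q' : ℕ) ≤ (q : ℕ) → q ∈ A → q' ∈ A := by
    intro q q' hle hq
    rcases eq_or_lt_of_le hle with he | hlt
    · have : q' = q := Fin.ext he
      rwa [this]
    · rw [hmemA] at hq ⊢
      have := h1 (finSumFinEquiv (Sum.inl q')) (finSumFinEquiv (Sum.inl q))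
        (by rw [emb_inl_val, emb_inl_val]; exact hlt) (by rw [emb_inl_val]; exact q.isLt)
      rw [Fin.lt_def] at this
      omega
  have hτinr : ∀ j : Fin n, j ∉ Cset ρ → ((τ (finSumFinEquiv (Sum.inr j))) : ℕ) < n := by
    intro j hj
    by_contra hge
    push_neg at hge
    have h5 := emb_toIdx_high hge
    exact hj (mem_Cset.2 ⟨_, (hb (toIdx (τ (finSumFinEquiv (Sum.inr j)))) j).1 h5.symm⟩)
  have hmaps : ∀ j ∈ (Cset ρ)ᶜ, toIdx (τ (finSumFinEquiv (Sum.inr j))) ∈ Aᶜ := by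
    intro j hj
    rw [Finset.mem_compl] at hj ⊢
    intro hvA
    have hv : ((τ (finSumFinEquiv (Sum.inr j))) : ℕ) < n := hτinr j hj
    have h5 := (emb_toIdx_low hv).symm
    have h6 := hAfix _ hvA
    have h7 := τ.injective (h5.trans h6.symm).symm
    have h8 := congrArg Fin.val h7
    rw [emb_inr_val, emb_inl_val] at h8
    have := (toIdx (τ (finSumFinEquiv (Sum.inr j)))).isLt
    omega
  have hinj : ∀ j ∈ (Cset ρ)ᶜ, ∀ j' ∈ (Cset ρ)ᶜ,
      toIdx (τ (finSumFinEquiv (Sum.inr j))) = toIdx (τ (finSumFinEquiv (Sum.inr j'))) →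
        j = j' := by
    intro j hj j' hj' he
    rw [Finset.mem_compl] at hj hj'
    have hv := hτinr j hj
    have hv' := hτinr j' hj'
    have h5 : τ (finSumFinEquiv (Sum.inr j)) = τ (finSumFinEquiv (Sum.inr j')) := by
      rw [← emb_toIdx_low hv, ← emb_toIdx_low hv', he]
    exact Sum.inr.inj (finSumFinEquiv.injective (τ.injective h5))
  have hsurj : ∀ q ∈ Aᶜ, ∃ j, ∃ _ : j ∈ (Cset ρ)ᶜ,
      toIdx (τ (finSumFinEquiv (Sum.inr j))) = q := by
    intro q hq
    rw [Finset.mem_compl] at hq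
    have hqn : n ≤ ((τ (finSumFinEquiv (Sum.inl q))) : ℕ) := by
      by_contra hlt
      push_neg at hlt
      exact hq ((hmemA q).2 hlt)
    have hxn : n ≤ ((τ.symm (finSumFinEquiv (Sum.inl q))) : ℕ) := by
      by_contra hlt
      push_neg at hlt
      have h5 := emb_toIdx_low hlt
      have h6 : τ (τ.symm (finSumFinEquiv (Sum.inl q))) = finSumFinEquiv (Sum.inl q) :=
        Equiv.apply_symm_apply _ _
      have h7 : toIdx (τ.symm (finSumFinEquiv (Sum.inl q))) ∈ A := by
        rw [hmemA, h5, h6, emb_inl_val]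
        exact q.isLt
      have h8 := hAfix _ h7
      rw [h5, h6] at h8
      have h9 : τ (finSumFinEquiv (Sum.inl q)) = finSumFinEquiv (Sum.inl q) := by
        conv_lhs => rw [h8]
        exact h6
      rw [h9, emb_inl_val] at hqn
      have := q.isLt
      omega
    refine ⟨toIdx (τ.symm (finSumFinEquiv (Sum.inl q))), ?_, ?_⟩
    · rw [Finset.mem_compl]
      intro hC
      have h5 : τ (finSumFinEquiv (Sum.inr (toIdx (τ.symm (finSumFinEquiv (Sum.inl q))))))
          = finSumFinEquiv (Sum.inl q) := by
        rw [emb_toIdx_high hxn, Equiv.apply_symm_apply]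
      have h6 := (hb (row ρ (toIdx (τ.symm (finSumFinEquiv (Sum.inl q)))))
        (toIdx (τ.symm (finSumFinEquiv (Sum.inl q))))).2 (row_spec hC)
      rw [h5] at h6
      have h7 := congrArg Fin.val h6
      rw [emb_inl_val, emb_inr_val] at h7
      have := q.isLt
      omega
    · rw [emb_toIdx_high hxn, Equiv.apply_symm_apply]
      apply Fin.ext
      rw [toIdx_val_low (by rw [emb_inl_val]; exact q.isLt), emb_inl_val]
  have hcards : ((Cset ρ)ᶜ).card = (Aᶜ).card := Finset.card_bij _ hmaps hinj hsurj
  have hAcard : A.card = (Cset ρ).card := by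
    have hc1 := card_Cc ρ
    have hc2 : (Aᶜ).card = n - A.card := by simp [Finset.card_compl]
    have hc3 : A.card ≤ n := by simpa using Finset.card_le_card (Finset.subset_univ A)
    omega
  have hAiff : ∀ q : Fin n, q ∈ A ↔ (q : ℕ) < (Cset ρ).card := by
    intro q
    constructor
    · intro hq
      by_contra hge
      push_neg at hge
      have hsub : Finset.Iic q ⊆ A := fun q' hq' =>
        hdc q q' (Fin.le_def.1 (Finset.mem_Iic.1 hq')) hq
      have := Finset.card_le_card hsub
      rw [Fin.card_Iic, hAcard] at this
      omega
    · intro hlt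
      by_contra hq
      have hsub : A ⊆ Finset.Iio q := by
        intro a ha
        rw [Finset.mem_Iio]
        by_contra hge
        push_neg at hge
        exact hq (hdc a q (Fin.le_def.1 hge) ha)
      have := Finset.card_le_card hsub
      rw [Fin.card_Iio, hAcard] at this
      omega
  intro p
  by_cases hp : (p : ℕ) < (Cset ρ).card
  · rw [F_inl_low hp]
    exact hAfix p ((hAiff p).2 hp)
  · obtain ⟨pf, hF⟩ := F_inl_high (hk := hk) hp
    rw [hF]
    have hposA : ∀ t, posIdx ρ hk t ∉ A := by
      intro t hin
      rw [hAiff, posIdx_val] at hin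
      omega
    have hhigh : ∀ t, n ≤ ((τ (finSumFinEquiv (Sum.inl (posIdx ρ hk t)))) : ℕ) := by
      intro t
      have h9 := hposA t
      simp only [hmemA] at h9
      omega
    have hgval : ∀ t, τ (finSumFinEquiv (Sum.inl (posIdx ρ hk t)))
        = finSumFinEquiv (Sum.inr (toIdx (τ (finSumFinEquiv (Sum.inl (posIdx ρ hk t)))))) :=
      fun t => (emb_toIdx_high (hhigh t)).symm
    have hgmem : ∀ t, toIdx (τ (finSumFinEquiv (Sum.inl (posIdx ρ hk t)))) ∈ (Rset ρ)ᶜ := by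
      intro t
      rw [Finset.mem_compl]
      intro hR
      obtain ⟨j, hj⟩ := mem_Rset.1 hR
      have h5 := (hb _ j).2 hj
      have h6 := τ.injective (h5.trans (hgval t).symm)
      have h7 := congrArg Fin.val h6
      rw [emb_inr_val, emb_inl_val, posIdx_val] at h7
      have := (posIdx ρ hk t).isLt
      rw [posIdx_val] at this
      omega
    have hgmono : StrictMono
        (fun t => toIdx (τ (finSumFinEquiv (Sum.inl (posIdx ρ hk t))))) := by
      intro t t' htt
      have h5 := h1 (finSumFinEquiv (Sum.inl (posIdx ρ hk t)))
        (finSumFinEquiv (Sum.inl (posIdx ρ hk t')))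
        (by rw [emb_inl_val, emb_inl_val, posIdx_val, posIdx_val]
            have := Fin.lt_def.1 htt
            omega)
        (by rw [emb_inl_val]; exact (posIdx ρ hk t').isLt)
      rw [hgval t, hgval t', Fin.lt_def, emb_inr_val, emb_inr_val] at h5
      simp only [Fin.lt_def]
      omega
    have huniq : (fun t => toIdx (τ (finSumFinEquiv (Sum.inl (posIdx ρ hk t)))))
        = ⇑((Rset ρ)ᶜ.orderEmbOfFin rfl) :=
      Finset.orderEmbOfFin_unique rfl hgmem hgmono
    have hidx : posIdx ρ hk ⟨(p : ℕ) - (Cset ρ).card, pf⟩ = p := by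
      apply Fin.ext
      rw [posIdx_val]
      simp only [Fin.val_mk]
      omega
    have h9 := hgval ⟨(p : ℕ) - (Cset ρ).card, pf⟩
    have h10 := congrFun huniq ⟨(p : ℕ) - (Cset ρ).card, pf⟩
    rw [hidx] at h9
    rw [h9]
    rw [hidx] at h10
    rw [h10]

end PPaux


/-- For every `n × n` partial permutation matrix `ρ` there is a unique `σ ∈ S_{2n}`
whose bottom-right `n × n` block is `ρ` and such that neither `σ` nor `σ⁻¹` has a
descent in positions `1, …, n-1`. -/
theorem stmt_12 {n : ℕ} (ρ : Fin n → Fin n → Bool)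
    (hrow : ∀ i j j', ρ i j = true → ρ i j' = true → j = j')
    (hcol : ∀ i i' j, ρ i j = true → ρ i' j = true → i = i') :
    ∃! σ : Equiv.Perm (Fin (n + n)),
      (∀ i j : Fin n,
        (σ (finSumFinEquiv (Sum.inr j)) = finSumFinEquiv (Sum.inr i) ↔ ρ i j = true)) ∧
      NoSmallDescents n σ := by
  classical
  have hk : (PPaux.Rset ρ).card = (PPaux.Cset ρ).card := PPaux.card_RC ρ hrow hcol
  have hk' : (PPaux.Rset (PPaux.swapρ ρ)).card = (PPaux.Cset (PPaux.swapρ ρ)).card := hk.symm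
  refine ⟨PPaux.sigma ρ hrow hcol hk hk',
    ⟨fun i j => PPaux.sigma_block i j, fun i j hji hjn => PPaux.sigma_nsd i j hji hjn⟩, ?_⟩
  rintro τ ⟨hb, hnsd⟩
  have h1 : ∀ a b : Fin (n + n), (a : ℕ) < (b : ℕ) → (b : ℕ) < n → τ a < τ b :=
    PPaux.chain _ (fun i j hji hjn => (hnsd i j hji hjn).1)
  have h2 : ∀ a b : Fin (n + n), (a : ℕ) < (b : ℕ) → (b : ℕ) < n → τ.symm a < τ.symm b :=
    PPaux.chain _ (fun i j hji hjn => (hnsd i j hji hjn).2)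
  have hb' : ∀ i j : Fin n,
      τ.symm (finSumFinEquiv (Sum.inr j)) = finSumFinEquiv (Sum.inr i)
        ↔ PPaux.swapρ ρ i j = true := by
    intro i j
    rw [Equiv.symm_apply_eq]
    constructor
    · intro h
      exact (hb j i).1 h.symm
    · intro h
      exact ((hb j i).2 h).symm
  have hUL := PPaux.uniq_inl ρ hk τ hb h1 h2
  have hUL' := PPaux.uniq_inl (PPaux.swapρ ρ) hk' τ.symm hb' h2
    (by simpa using h1)
  apply Equiv.ext
  intro x
  obtain ⟨y, rfl⟩ : ∃ y, x = finSumFinEquiv y :=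
    ⟨finSumFinEquiv.symm x, (Equiv.apply_symm_apply _ _).symm⟩
  rw [PPaux.sigma_apply]
  match y with
  | Sum.inl p => exact hUL p
  | Sum.inr j =>
    by_cases h : j ∈ PPaux.Cset ρ
    · rw [PPaux.F_inr_pos h]
      exact (hb (PPaux.row ρ j) j).2 (PPaux.row_spec h)
    · obtain ⟨pf, hF⟩ := PPaux.F_inr_neg (hk := hk) h
      rw [hF]
      rw [Equiv.apply_eq_iff_eq_symm_apply]
      rw [hUL' _]
      have h9 := PPaux.FF ρ hrow hk hk' (Sum.inr j)
      rw [hF] at h9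
      rw [h9]
end

section
/- Let σ ∈ S_m and suppose σ(i) > σ(i+1) (a descent at i). Then there exists j with σ(i+1) ≤ j < σ(i) such that (i, j) belongs to the essential set of σ, i.e., (i,j) is in the diagram D(σ) = {(a,b) : σ(a) > b, σ⁻¹(b) > a} and (i+1, j) ∉ D(σ) and (i, j+1) ∉ D(σ). -/
/-- The diagram of `σ` (0-indexed): `(a,b) ∈ D(σ)` iff `σ(a) > b` and `σ⁻¹(b) > a`. -/
def InDiagram {m : ℕ} (σ : Equiv.Perm (Fin m)) (a b : Fin m) : Prop :=
  (b : ℕ) < (σ a : ℕ) ∧ (a : ℕ) < (σ.symm b : ℕ)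

/-- The essential set of `σ` : southeast corners of the diagram. -/
def InEssential {m : ℕ} (σ : Equiv.Perm (Fin m)) (a b : Fin m) : Prop :=
  InDiagram σ a b ∧
  (∀ a' : Fin m, (a' : ℕ) = (a : ℕ) + 1 → ¬ InDiagram σ a' b) ∧
  (∀ b' : Fin m, (b' : ℕ) = (b : ℕ) + 1 → ¬ InDiagram σ a b')

/-- If `σ` has a descent at `i` (i.e. `σ(i) > σ(i+1)`), then some `(i, j)` with
`σ(i+1) ≤ j < σ(i)` lies in the essential set of `σ`. -/
theorem stmt_13 {m : ℕ} (σ : Equiv.Perm (Fin m)) (i i' : Fin m)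
    (hii' : (i' : ℕ) = (i : ℕ) + 1) (hdesc : σ i' < σ i) :
    ∃ j : Fin m, (σ i' : ℕ) ≤ (j : ℕ) ∧ (j : ℕ) < (σ i : ℕ) ∧ InEssential σ i j := by
  classical
  set S : Finset (Fin m) :=
    Finset.univ.filter (fun j => (j : ℕ) < (σ i : ℕ) ∧ (i : ℕ) < (σ.symm j : ℕ)) with hS
  have hmem : σ i' ∈ S := by
    simp only [hS, Finset.mem_filter, Finset.mem_univ, true_and, Equiv.symm_apply_apply]
    exact ⟨hdesc, by omega⟩
  have hne : S.Nonempty := ⟨σ i', hmem⟩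
  set j : Fin m := S.max' hne with hj
  have hjS : j ∈ S := S.max'_mem hne
  have hjS' : (j : ℕ) < (σ i : ℕ) ∧ (i : ℕ) < (σ.symm j : ℕ) := by
    simpa [hS] using hjS
  have hle : σ i' ≤ j := S.le_max' _ hmem
  refine ⟨j, hle, hjS'.1, hjS', ?_, ?_⟩
  · intro a' ha' hD
    have : a' = i' := Fin.ext (by omega)
    subst this
    exact absurd hD.1 (by exact_mod_cast not_lt.mpr hle)
  · intro b' hb' hD
    have : b' ∈ S := by
      simp only [hS, Finset.mem_filter, Finset.mem_univ, true_and]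
      exact ⟨hD.1, hD.2⟩
    have := S.le_max' _ this
    rw [← hj] at this
    have : (b' : ℕ) ≤ (j : ℕ) := this
    omega
end

section
/- Let σ ∈ S_{2n}. If the essential set of σ is contained in the bottom-right (n+1)×(n+1) submatrix (i.e., every essential box (a,b) satisfies a ≥ n and b ≥ n), then neither σ nor σ⁻¹ has a descent in {1,…,n−1}. -/
lemma inDiagram_symm {m : ℕ} (σ : Equiv.Perm (Fin m)) (a b : Fin m) :
    InDiagram σ.symm a b ↔ InDiagram σ b a := by
  unfold InDiagram
  rw [Equiv.symm_symm]
  exact and_comm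

lemma inEssential_symm {m : ℕ} (σ : Equiv.Perm (Fin m)) (a b : Fin m) :
    InEssential σ.symm a b → InEssential σ b a := by
  rintro ⟨h1, h2, h3⟩
  refine ⟨(inDiagram_symm σ a b).1 h1, ?_, ?_⟩
  · intro b' hb' hd
    exact h3 b' hb' ((inDiagram_symm σ a b').2 hd)
  · intro a' ha' hd
    exact h2 a' ha' ((inDiagram_symm σ a' b).2 hd)

/-- A descent of `σ` at row `i` produces an essential box in row `i`. -/
lemma descent_essential {m : ℕ} (σ : Equiv.Perm (Fin m)) (i j : Fin m)
    (hj : (j : ℕ) = (i : ℕ) + 1) (hd : σ j < σ i) :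
    ∃ b : Fin m, InEssential σ i b := by
  classical
  have hij : (σ j : ℕ) < (σ i : ℕ) := hd
  have hmem : InDiagram σ i (σ j) := by
    constructor
    · exact hij
    · rw [Equiv.symm_apply_apply, hj]; omega
  set s : Finset (Fin m) := Finset.univ.filter (fun b => InDiagram σ i b) with hs
  have hne : s.Nonempty := ⟨σ j, by simp [hs, hmem]⟩
  obtain ⟨b, hb, hmax⟩ := s.exists_max_image (fun b => (b : ℕ)) hne
  have hbD : InDiagram σ i b := by simpa [hs] using hb
  have hmax' : ∀ b' : Fin m, InDiagram σ i b' → (b' : ℕ) ≤ (b : ℕ) := by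
    intro b' hb'
    exact hmax b' (by simp [hs, hb'])
  refine ⟨b, hbD, ?_, ?_⟩
  · intro a' ha' hd'
    -- a' has value i+1 = j, so a' = j
    have haj : a' = j := Fin.ext (by omega)
    subst haj
    -- from hd' : b < σ a' = σ j, but σ j ∈ s so σ j ≤ b
    have h1 : (b : ℕ) < (σ a' : ℕ) := hd'.1
    have h2 : (σ a' : ℕ) ≤ (b : ℕ) := hmax' (σ a') hmem
    omega
  · intro b' hb' hd'
    have : (b' : ℕ) ≤ (b : ℕ) := hmax' b' hd'
    omega

/-- If the essential set of `σ ∈ S_{2n}` lies in the bottom-right `(n+1) × (n+1)`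
submatrix (1-indexed rows and columns `≥ n`), then neither `σ` nor `σ⁻¹` has a
descent in positions `1, …, n-1`. -/
theorem stmt_14 {n : ℕ} (σ : Equiv.Perm (Fin (n + n)))
    (hess : ∀ a b : Fin (n + n), InEssential σ a b →
      n ≤ (a : ℕ) + 1 ∧ n ≤ (b : ℕ) + 1) :
    ∀ i j : Fin (n + n), (j : ℕ) = (i : ℕ) + 1 → (j : ℕ) < n →
      σ i < σ j ∧ σ.symm i < σ.symm j := by
  intro i j hj hjn
  have hij : i ≠ j := by
    intro h; rw [h] at hj; omega
  constructor
  · by_contra h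
    push_neg at h
    have hd : σ j < σ i := lt_of_le_of_ne h (fun e => hij (σ.injective e.symm))
    obtain ⟨b, hb⟩ := descent_essential σ i j hj hd
    have := (hess i b hb).1
    omega
  · by_contra h
    push_neg at h
    have hd : σ.symm j < σ.symm i :=
      lt_of_le_of_ne h (fun e => hij (σ.symm.injective e.symm))
    obtain ⟨b, hb⟩ := descent_essential σ.symm i j hj hd
    have := (hess b i (inEssential_symm σ i b hb)).2
    omega
end

section
/- Let ρ be an n×n partial permutation matrix of rank r = a+b+c+d, where for given i, j ∈ {0,…,n} we write a = rank of the top-left i×j block of ρ, b = rank of the top-right i×(n−j) block, c = rank of the bottom-left (n−i)×j block, d = rank of the bottom-right (n−i)×(n−j) block. Let σ ∈ S_{2n} be the unique permutation with bottom-right n×n block ρ and no descents of σ or σ⁻¹ in {1,…,n−1}. Then the rank of the top-left (n+i)×(n+j) submatrix of the permutation matrix of σ equals d + i + j. -/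
lemma count_lt (N k : ℕ) (hk : k ≤ N) :
    ((Finset.univ : Finset (Fin N)).filter fun v : Fin N => (v : ℕ) < k).card = k := by
  have : ((Finset.univ : Finset (Fin N)).filter fun v : Fin N => (v : ℕ) < k).card
      = (Finset.range k).card := by
    apply Finset.card_bij (fun (a : Fin N) _ => (a : ℕ))
    · intro a ha
      simp only [Finset.mem_filter] at ha
      simpa using ha.2
    · intro a _ b _ h
      exact Fin.val_injective h
    · intro b hb
      simp only [Finset.mem_range] at hb
      exact ⟨⟨b, lt_of_lt_of_le hb hk⟩, by simp [hb], rfl⟩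
  simpa using this


/-- Let `ρ` be an `n × n` partial permutation matrix, `i, j ≤ n`, and let `σ ∈ S_{2n}`
be the unique permutation with bottom-right `n × n` block `ρ` and no descents of `σ`
or `σ⁻¹` in positions `1,…,n-1`.  Then the number of 1s of the permutation matrix of
`σ` in its top-left `(n+i) × (n+j)` submatrix equals `d + i + j`, where `d` is the
rank (number of 1s) of the bottom-right `(n-i) × (n-j)` block of `ρ`. -/
theorem stmt_16 {n : ℕ} (ρ : Fin n → Fin n → Bool)
    (hrow : ∀ i j j', ρ i j = true → ρ i j' = true → j = j')
    (hcol : ∀ i i' j, ρ i j = true → ρ i' j = true → i = i')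
    (i j : ℕ) (hi : i ≤ n) (hj : j ≤ n)
    (σ : Equiv.Perm (Fin (n + n)))
    (hbr : ∀ a b : Fin n,
      (σ (finSumFinEquiv (Sum.inr b)) = finSumFinEquiv (Sum.inr a) ↔ ρ a b = true))
    (hdesc : NoSmallDescents n σ) :
    {c : Fin (n + n) | (c : ℕ) < n + j ∧ (σ c : ℕ) < n + i}.ncard =
      {p : Fin n × Fin n | i ≤ (p.1 : ℕ) ∧ j ≤ (p.2 : ℕ) ∧ ρ p.1 p.2 = true}.ncard
        + i + j := by

  classical
  have hval : ∀ x : Fin n, ((finSumFinEquiv (Sum.inr x) : Fin (n+n)) : ℕ) = n + x := by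
    intro x; rw [finSumFinEquiv_apply_right]; rfl
  set A := (Finset.univ : Finset (Fin (n+n))).filter
    (fun c : Fin (n+n) => (c : ℕ) < n + j ∧ (σ c : ℕ) < n + i) with hA
  set X := (Finset.univ : Finset (Fin (n+n))).filter
    (fun c : Fin (n+n) => ¬ (c : ℕ) < n + j ∧ (σ c : ℕ) < n + i) with hX
  set B := (Finset.univ : Finset (Fin (n+n))).filter
    (fun c : Fin (n+n) => ¬ (c : ℕ) < n + j ∧ ¬ (σ c : ℕ) < n + i) with hB
  set D := (Finset.univ : Finset (Fin n × Fin n)).filter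
    (fun p : Fin n × Fin n => i ≤ (p.1 : ℕ) ∧ j ≤ (p.2 : ℕ) ∧ ρ p.1 p.2 = true) with hD
  have hsetA : {c : Fin (n + n) | (c : ℕ) < n + j ∧ (σ c : ℕ) < n + i} = ↑A := by
    ext c; simp [hA]
  have hsetD : {p : Fin n × Fin n | i ≤ (p.1 : ℕ) ∧ j ≤ (p.2 : ℕ) ∧ ρ p.1 p.2 = true} = ↑D := by
    ext p; simp [hD]
  rw [hsetA, hsetD, Set.ncard_coe_finset, Set.ncard_coe_finset]
  set S := (Finset.univ : Finset (Fin (n+n))).filter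
    (fun c : Fin (n+n) => (σ c : ℕ) < n + i) with hS
  -- A.card + X.card = n + i
  have h1 : A.card + X.card = n + i := by
    have eA : A = S.filter (fun c : Fin (n+n) => (c : ℕ) < n + j) := by
      ext c; simp only [hA, hS, Finset.mem_filter, Finset.mem_univ, true_and]
      try tauto
    have eX : X = S.filter (fun c : Fin (n+n) => ¬ (c : ℕ) < n + j) := by
      ext c; simp only [hX, hS, Finset.mem_filter, Finset.mem_univ, true_and]
      try tauto
    have hScard : S.card = n + i := by
      have : S.card = ((Finset.univ : Finset (Fin (n+n))).filter
          (fun v : Fin (n+n) => (v : ℕ) < n + i)).card := by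
        apply Finset.card_bij (fun c _ => σ c)
        · intro c hc; simp only [hS, Finset.mem_filter] at hc ⊢
          exact ⟨Finset.mem_univ _, hc.2⟩
        · intro a _ b _ h; exact σ.injective h
        · intro v hv; simp only [Finset.mem_filter] at hv
          exact ⟨σ.symm v, by simp [hS, hv.2], by simp⟩
      rw [this, count_lt _ _ (by omega)]
    rw [eA, eX, Finset.card_filter_add_card_filter_not, hScard]
  -- X.card + B.card = n - j
  have h2 : X.card + B.card = n - j := by
    set T := (Finset.univ : Finset (Fin (n+n))).filter
      (fun c : Fin (n+n) => ¬ (c : ℕ) < n + j) with hT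
    have eX : X = T.filter (fun c : Fin (n+n) => (σ c : ℕ) < n + i) := by
      ext c; simp only [hX, hT, Finset.mem_filter, Finset.mem_univ, true_and]
      try tauto
    have eB : B = T.filter (fun c : Fin (n+n) => ¬ (σ c : ℕ) < n + i) := by
      ext c; simp only [hB, hT, Finset.mem_filter, Finset.mem_univ, true_and]
      try tauto
    have hTcard : T.card = n - j := by
      have h3 := Finset.card_filter_add_card_filter_not
        (s := (Finset.univ : Finset (Fin (n+n)))) (p := fun c : Fin (n+n) => (c : ℕ) < n + j)
      rw [count_lt _ _ (by omega), Finset.card_univ, Fintype.card_fin] at h3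
      rw [hT]; omega
    rw [eX, eB, Finset.card_filter_add_card_filter_not, hTcard]
  -- B.card = D.card via bijection
  have hBD : B.card = D.card := by
    apply Finset.card_bij (fun c hc =>
      (⟨(σ c : ℕ) - n, by
          simp only [hB, Finset.mem_filter, not_lt] at hc
          have := (σ c).isLt; omega⟩,
       ⟨(c : ℕ) - n, by
          simp only [hB, Finset.mem_filter, not_lt] at hc
          have := c.isLt; omega⟩))
    · intro c hc
      simp only [hB, Finset.mem_filter, not_lt] at hc
      obtain ⟨-, hc1, hc2⟩ := hc
      have hσlt := (σ c).isLt
      have hclt := c.isLt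
      have hρ : ρ ⟨(σ c : ℕ) - n, by omega⟩ ⟨(c : ℕ) - n, by omega⟩ = true := by
        rw [← hbr]
        have e1 : finSumFinEquiv (Sum.inr (⟨(c : ℕ) - n, by omega⟩ : Fin n)) = c :=
          Fin.ext (by rw [hval]; simp; omega)
        have e2 : finSumFinEquiv (Sum.inr (⟨(σ c : ℕ) - n, by omega⟩ : Fin n)) = σ c :=
          Fin.ext (by rw [hval]; simp; omega)
        rw [e1, e2]
      simp only [hD, Finset.mem_filter]
      refine ⟨Finset.mem_univ _, ?_, ?_, hρ⟩
      · show i ≤ (σ c : ℕ) - n; omega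
      · show j ≤ (c : ℕ) - n; omega
    · intro c1 hc1 c2 hc2 h
      simp only [hB, Finset.mem_filter, not_lt] at hc1 hc2
      have h2 := congrArg (fun p : Fin n × Fin n => (p.2 : ℕ)) h
      simp only at h2
      exact Fin.ext (by omega)
    · intro p hp
      simp only [hD, Finset.mem_filter] at hp
      obtain ⟨-, hp1, hp2, hp3⟩ := hp
      have e : σ (finSumFinEquiv (Sum.inr p.2)) = finSumFinEquiv (Sum.inr p.1) :=
        (hbr p.1 p.2).2 hp3
      have ev1 : ((σ (finSumFinEquiv (Sum.inr p.2))) : ℕ) = n + p.1 := by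
        rw [e, hval]
      have ev2 : ((finSumFinEquiv (Sum.inr p.2) : Fin (n+n))).val = n + p.2 := hval p.2
      refine ⟨finSumFinEquiv (Sum.inr p.2), ?_, ?_⟩
      · simp only [hB, Finset.mem_filter, not_lt]
        exact ⟨Finset.mem_univ _, by omega, by omega⟩
      · have hq1 : (p.1 : ℕ) < n := p.1.isLt
        refine Prod.ext (Fin.ext ?_) (Fin.ext ?_)
        · show ((σ (finSumFinEquiv (Sum.inr p.2))) : ℕ) - n = (p.1 : ℕ)
          omega
        · show ((finSumFinEquiv (Sum.inr p.2) : Fin (n+n)) : ℕ) - n = (p.2 : ℕ)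
          omega
  omega
end

section
/- Let σ_GS = (1,…,n, 2n, 2n−1, …, n+1) ∈ S_{2n} in one-line notation. The covers of σ_GS in Bruhat order (elements w with w > σ_GS and ℓ(w) = ℓ(σ_GS)+1) are exactly: (a) σ_GS · s_i = s_i · σ_GS for i = 1,…,n−1 (where s_i is the simple transposition (i, i+1)), and (b) σ_GS · t_{n,j} for j ∈ {n+1,…,2n} (where t_{n,j} is the transposition swapping n and j), and these n−1 + n elements are all distinct. -/
/-- The number of inversions of a permutation of `Fin m`. -/
noncomputable def invCount {m : ℕ} (σ : Equiv.Perm (Fin m)) : ℕ :=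
  {p : Fin m × Fin m | p.1 < p.2 ∧ σ p.2 < σ p.1}.ncard

/-- `w` covers `v` in Bruhat order: `w = v·t` for a transposition `t` and
`ℓ(w) = ℓ(v) + 1`. -/
def BruhatCover {m : ℕ} (v w : Equiv.Perm (Fin m)) : Prop :=
  (∃ a b : Fin m, a ≠ b ∧ w = v * Equiv.swap a b) ∧ invCount w = invCount v + 1

lemma swap_val {μ : ℕ} (a b x : Fin μ) :
    ((Equiv.swap a b x : Fin μ) : ℕ) =
      if (x : ℕ) = (a : ℕ) then (b : ℕ) else if (x : ℕ) = (b : ℕ) then (a : ℕ) else (x : ℕ) := by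
  rw [Equiv.swap_apply_def]
  split_ifs <;> simp_all [Fin.ext_iff]

lemma aux1 {μ : ℕ} (σ t : Equiv.Perm (Fin μ)) (ht : ∀ x, t (t x) = x) :
    invCount (σ * t) +
      {p : Fin μ × Fin μ | p.1 < p.2 ∧ t p.2 < t p.1 ∧ σ p.2 < σ p.1}.ncard
    = invCount σ +
      {p : Fin μ × Fin μ | p.1 < p.2 ∧ t p.2 < t p.1 ∧ σ p.1 < σ p.2}.ncard := by
  classical
  set L := {p : Fin μ × Fin μ | p.1 < p.2 ∧ t p.2 < t p.1 ∧ σ p.2 < σ p.1} with hL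
  set G := {p : Fin μ × Fin μ | p.1 < p.2 ∧ t p.2 < t p.1 ∧ σ p.1 < σ p.2} with hG
  set Eσ := {p : Fin μ × Fin μ | p.1 < p.2 ∧ σ p.2 < σ p.1} with hEσ
  set E := {p : Fin μ × Fin μ | t p.1 < t p.2 ∧ σ p.2 < σ p.1} with hE
  have htne : ∀ x y : Fin μ, x ≠ y → t x ≠ t y := fun x y h h' => h (t.injective h')
  -- step A
  have hA : invCount (σ * t) = E.ncard := by
    have hinj : Function.Injective (fun p : Fin μ × Fin μ => (t p.1, t p.2)) := by
      intro p q h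
      simp only [Prod.mk.injEq] at h
      exact Prod.ext (t.injective h.1) (t.injective h.2)
    have himg : (fun p : Fin μ × Fin μ => (t p.1, t p.2)) ''
        {p : Fin μ × Fin μ | p.1 < p.2 ∧ (σ * t) p.2 < (σ * t) p.1} = E := by
      ext q
      constructor
      · rintro ⟨p, ⟨h1, h2⟩, rfl⟩
        simp only [Equiv.Perm.mul_apply] at h2
        exact ⟨by simpa [ht] using h1, h2⟩
      · rintro ⟨h1, h2⟩
        exact ⟨(t q.1, t q.2), ⟨h1, by simpa [Equiv.Perm.mul_apply, ht] using h2⟩,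
          by simp [ht]⟩
    rw [invCount, ← himg, Set.ncard_image_of_injective _ hinj]
  have hG' : (Prod.swap ⁻¹' G).ncard = G.ncard := by
    rw [← Set.image_swap_eq_preimage_swap, Set.ncard_image_of_injective _ Prod.swap_injective]
  have hEeq : E = (Eσ \ L) ∪ (Prod.swap ⁻¹' G) := by
    ext ⟨x, y⟩
    simp only [hE, hG, hEσ, hL, Set.mem_setOf_eq, Set.mem_union, Set.mem_diff,
      Set.mem_preimage, Prod.fst_swap, Prod.snd_swap, Prod.fst, Prod.snd]
    constructor
    · rintro ⟨h1, h2⟩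
      have hxy : x ≠ y := fun h => absurd (h ▸ h2) (lt_irrefl _)
      rcases hxy.lt_or_gt with h | h
      · exact Or.inl ⟨⟨h, h2⟩, fun hc => absurd h1 (not_lt.2 hc.2.1.le)⟩
      · exact Or.inr ⟨h, h1, h2⟩
    · rintro (⟨⟨h1, h2⟩, h3⟩ | ⟨h1, h2, h3⟩)
      · have : ¬ t y < t x := fun hc => h3 ⟨h1, hc, h2⟩
        have hne : t x ≠ t y := htne _ _ (ne_of_lt h1)
        exact ⟨hne.lt_or_gt.resolve_right this, h2⟩
      · exact ⟨h2, h3⟩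
  have hdisj : Disjoint (Eσ \ L) (Prod.swap ⁻¹' G) := by
    rw [Set.disjoint_left]
    rintro ⟨x, y⟩ ⟨⟨h1, _⟩, _⟩ hg
    exact absurd h1 (not_lt.2 hg.1.le)
  have hLsub : L ⊆ Eσ := fun p hp => ⟨hp.1, hp.2.2⟩
  have h1 : E.ncard = (Eσ \ L).ncard + (Prod.swap ⁻¹' G).ncard := by
    rw [hEeq, Set.ncard_union_eq hdisj (Set.toFinite _) (Set.toFinite _)]
  have h2 : (Eσ \ L).ncard + L.ncard = Eσ.ncard :=
    Set.ncard_diff_add_ncard_of_subset hLsub (Set.toFinite _)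
  have hIσ : invCount σ = Eσ.ncard := rfl
  omega

section
variable {n : ℕ} (σ : Equiv.Perm (Fin (n + n)))
  (hσ : ∀ i : Fin (n + n), (σ i : ℕ) = if (i : ℕ) < n then (i : ℕ) else 3 * n - 1 - (i : ℕ))

include hσ

lemma cover_A1 (a b : Fin (n + n)) (hab : (b : ℕ) = (a : ℕ) + 1) (hbn : (b : ℕ) < n) :
    invCount (σ * Equiv.swap a b) = invCount σ + 1 := by
  have key := aux1 σ (Equiv.swap a b) (fun x => Equiv.swap_apply_self a b x)
  have hL : {p : Fin (n+n) × Fin (n+n) | p.1 < p.2 ∧ Equiv.swap a b p.2 < Equiv.swap a b p.1 ∧ σ p.2 < σ p.1} = ∅ := by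
    ext ⟨x, y⟩
    have h1 := x.isLt; have h2 := y.isLt; have h3 := a.isLt; have h4 := b.isLt
    simp only [Set.mem_setOf_eq, Set.mem_empty_iff_false, iff_false, not_and, Fin.lt_def, swap_val, hσ]
    split_ifs <;> omega
  have hG : {p : Fin (n+n) × Fin (n+n) | p.1 < p.2 ∧ Equiv.swap a b p.2 < Equiv.swap a b p.1 ∧ σ p.1 < σ p.2} = {(a, b)} := by
    ext ⟨x, y⟩
    have h1 := x.isLt; have h2 := y.isLt; have h3 := a.isLt; have h4 := b.isLt
    simp only [Set.mem_setOf_eq, Set.mem_singleton_iff, Prod.mk.injEq, Fin.lt_def, swap_val, hσ, Fin.ext_iff]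
    split_ifs <;> omega
  rw [hL, hG, Set.ncard_empty, Set.ncard_singleton] at key
  omega

lemma cover_C (a b : Fin (n + n)) (ha : n ≤ (a : ℕ)) (hab : (a : ℕ) < (b : ℕ)) :
    invCount (σ * Equiv.swap a b) ≤ invCount σ := by
  have key := aux1 σ (Equiv.swap a b) (fun x => Equiv.swap_apply_self a b x)
  have hG : {p : Fin (n+n) × Fin (n+n) | p.1 < p.2 ∧ Equiv.swap a b p.2 < Equiv.swap a b p.1 ∧ σ p.1 < σ p.2} = ∅ := by
    ext ⟨x, y⟩
    have h1 := x.isLt; have h2 := y.isLt; have h3 := a.isLt; have h4 := b.isLt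
    simp only [Set.mem_setOf_eq, Set.mem_empty_iff_false, iff_false, not_and, Fin.lt_def, swap_val, hσ]
    split_ifs <;> omega
  rw [hG, Set.ncard_empty] at key
  omega

lemma cover_A2 (a b : Fin (n + n)) (hab : (a : ℕ) < (b : ℕ)) (hbn : (b : ℕ) < n)
    (hne : (b : ℕ) ≠ (a : ℕ) + 1) :
    invCount σ + 2 ≤ invCount (σ * Equiv.swap a b) := by
  have key := aux1 σ (Equiv.swap a b) (fun x => Equiv.swap_apply_self a b x)
  have hL : {p : Fin (n+n) × Fin (n+n) | p.1 < p.2 ∧ Equiv.swap a b p.2 < Equiv.swap a b p.1 ∧ σ p.2 < σ p.1} = ∅ := by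
    ext ⟨x, y⟩
    have h1 := x.isLt; have h2 := y.isLt; have h3 := a.isLt; have h4 := b.isLt
    simp only [Set.mem_setOf_eq, Set.mem_empty_iff_false, iff_false, not_and, Fin.lt_def, swap_val, hσ]
    split_ifs <;> omega
  have hn2 : (a : ℕ) + 1 < n + n := by omega
  set a' : Fin (n + n) := ⟨(a : ℕ) + 1, hn2⟩ with ha'
  have hpair : ({((a : Fin (n+n)), b), (a, a')} : Set (Fin (n+n) × Fin (n+n))) ⊆
      {p : Fin (n+n) × Fin (n+n) | p.1 < p.2 ∧ Equiv.swap a b p.2 < Equiv.swap a b p.1 ∧ σ p.1 < σ p.2} := by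
    have h3 := a.isLt; have h4 := b.isLt
    rintro p (rfl | rfl) <;>
    · simp only [Set.mem_setOf_eq, Fin.lt_def, swap_val, hσ, ha']
      split_ifs <;> omega
  have hcard : 2 ≤ ({p : Fin (n+n) × Fin (n+n) | p.1 < p.2 ∧ Equiv.swap a b p.2 < Equiv.swap a b p.1 ∧ σ p.1 < σ p.2}).ncard := by
    have hne2 : ((a : Fin (n+n)), b) ≠ (a, a') := by
      have haval : (a' : ℕ) = (a : ℕ) + 1 := rfl
      intro h
      have hb2 : (b : ℕ) = (a' : ℕ) := congrArg Fin.val (congrArg Prod.snd h)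
      omega
    calc 2 = ({((a : Fin (n+n)), b), (a, a')} : Set (Fin (n+n) × Fin (n+n))).ncard :=
          (Set.ncard_pair hne2).symm
      _ ≤ _ := Set.ncard_le_ncard hpair (Set.toFinite _)
  rw [hL, Set.ncard_empty] at key
  omega

lemma cover_B1 (a b : Fin (n + n)) (ha : (a : ℕ) + 1 = n) (hb : n ≤ (b : ℕ)) :
    invCount (σ * Equiv.swap a b) = invCount σ + 1 := by
  have key := aux1 σ (Equiv.swap a b) (fun x => Equiv.swap_apply_self a b x)
  have h3 := a.isLt; have h4 := b.isLt
  have hLd : {p : Fin (n+n) × Fin (n+n) | p.1 < p.2 ∧ Equiv.swap a b p.2 < Equiv.swap a b p.1 ∧ σ p.2 < σ p.1}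
      = {p : Fin (n+n) × Fin (n+n) | p.2 = b ∧ n ≤ (p.1 : ℕ) ∧ (p.1 : ℕ) < (b : ℕ)} := by
    ext ⟨x, y⟩
    have h1 := x.isLt; have h2 := y.isLt
    simp only [Set.mem_setOf_eq, Fin.lt_def, swap_val, hσ, Fin.ext_iff]
    split_ifs <;> omega
  have hGd : {p : Fin (n+n) × Fin (n+n) | p.1 < p.2 ∧ Equiv.swap a b p.2 < Equiv.swap a b p.1 ∧ σ p.1 < σ p.2}
      = {p : Fin (n+n) × Fin (n+n) | p.1 = a ∧ (a : ℕ) < (p.2 : ℕ) ∧ (p.2 : ℕ) ≤ (b : ℕ)} := by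
    ext ⟨x, y⟩
    have h1 := x.isLt; have h2 := y.isLt
    simp only [Set.mem_setOf_eq, Fin.lt_def, swap_val, hσ, Fin.ext_iff]
    split_ifs <;> omega
  set Lexp := {p : Fin (n+n) × Fin (n+n) | p.2 = b ∧ n ≤ (p.1 : ℕ) ∧ (p.1 : ℕ) < (b : ℕ)} with hLexp
  have hinj : Set.InjOn (fun p : Fin (n+n) × Fin (n+n) => ((a : Fin (n+n)), p.1)) Lexp := by
    rintro ⟨u, v⟩ ⟨hv, _, _⟩ ⟨u', v'⟩ ⟨hv', _, _⟩ heq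
    exact Prod.ext (congrArg Prod.snd heq) (hv.trans hv'.symm)
  have hnm : ((a : Fin (n+n)), b) ∉ (fun p : Fin (n+n) × Fin (n+n) => ((a : Fin (n+n)), p.1)) '' Lexp := by
    rintro ⟨q, hq, heq⟩
    obtain ⟨hv, hu1, hu2⟩ := hq
    have heq' : ((a : Fin (n+n)), q.1) = ((a : Fin (n+n)), b) := heq
    have : (q.1 : ℕ) = (b : ℕ) := congrArg Fin.val (congrArg Prod.snd heq')
    omega
  have hGi : {p : Fin (n+n) × Fin (n+n) | p.1 = a ∧ (a : ℕ) < (p.2 : ℕ) ∧ (p.2 : ℕ) ≤ (b : ℕ)}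
      = insert ((a : Fin (n+n)), b) ((fun p : Fin (n+n) × Fin (n+n) => ((a : Fin (n+n)), p.1)) '' Lexp) := by
    ext ⟨x, y⟩
    have h1 := x.isLt; have h2 := y.isLt
    simp only [Set.mem_setOf_eq, Set.mem_insert_iff, Set.mem_image, Prod.mk.injEq, Prod.exists, hLexp]
    constructor
    · rintro ⟨hx, hy1, hy2⟩
      rcases eq_or_ne y b with rfl | hyb
      · exact Or.inl ⟨hx, rfl⟩
      · have hyv : (y : ℕ) ≠ (b : ℕ) := fun h => hyb (Fin.ext h)
        exact Or.inr ⟨y, b, ⟨rfl, by omega, by omega⟩, hx.symm, rfl⟩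
    · rintro (⟨hx, hy⟩ | ⟨u, v, ⟨hv, hu1, hu2⟩, hx, hy⟩)
      · have hyv : (y : ℕ) = (b : ℕ) := congrArg Fin.val hy
        exact ⟨hx, by omega, by omega⟩
      · have hyv : (u : ℕ) = (y : ℕ) := congrArg Fin.val hy
        exact ⟨hx.symm, by omega, by omega⟩
  rw [hLd, hGd, hGi, Set.ncard_insert_of_notMem hnm (Set.toFinite _),
    Set.ncard_image_of_injOn hinj] at key
  omega

lemma cover_B2 (a b : Fin (n + n)) (ha : (a : ℕ) + 1 < n) (hb : n ≤ (b : ℕ)) :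
    invCount σ + 2 ≤ invCount (σ * Equiv.swap a b) := by
  have key := aux1 σ (Equiv.swap a b) (fun x => Equiv.swap_apply_self a b x)
  have h3 := a.isLt; have h4 := b.isLt
  have hLd : {p : Fin (n+n) × Fin (n+n) | p.1 < p.2 ∧ Equiv.swap a b p.2 < Equiv.swap a b p.1 ∧ σ p.2 < σ p.1}
      = {p : Fin (n+n) × Fin (n+n) | p.2 = b ∧ n ≤ (p.1 : ℕ) ∧ (p.1 : ℕ) < (b : ℕ)} := by
    ext ⟨x, y⟩
    have h1 := x.isLt; have h2 := y.isLt
    simp only [Set.mem_setOf_eq, Fin.lt_def, swap_val, hσ, Fin.ext_iff]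
    split_ifs <;> omega
  have hGd : {p : Fin (n+n) × Fin (n+n) | p.1 < p.2 ∧ Equiv.swap a b p.2 < Equiv.swap a b p.1 ∧ σ p.1 < σ p.2}
      = {p : Fin (n+n) × Fin (n+n) | (p.1 = a ∧ (a : ℕ) < (p.2 : ℕ) ∧ (p.2 : ℕ) ≤ (b : ℕ)) ∨
          (p.2 = b ∧ (a : ℕ) ≤ (p.1 : ℕ) ∧ (p.1 : ℕ) < n)} := by
    ext ⟨x, y⟩
    have h1 := x.isLt; have h2 := y.isLt
    simp only [Set.mem_setOf_eq, Fin.lt_def, swap_val, hσ, Fin.ext_iff]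
    split_ifs <;> omega
  set Lexp := {p : Fin (n+n) × Fin (n+n) | p.2 = b ∧ n ≤ (p.1 : ℕ) ∧ (p.1 : ℕ) < (b : ℕ)} with hLexp
  set Gexp := {p : Fin (n+n) × Fin (n+n) | (p.1 = a ∧ (a : ℕ) < (p.2 : ℕ) ∧ (p.2 : ℕ) ≤ (b : ℕ)) ∨
          (p.2 = b ∧ (a : ℕ) ≤ (p.1 : ℕ) ∧ (p.1 : ℕ) < n)} with hGexp
  have hn2 : (a : ℕ) + 1 < n + n := by omega
  set a' : Fin (n + n) := ⟨(a : ℕ) + 1, hn2⟩ with ha'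
  have haval : (a' : ℕ) = (a : ℕ) + 1 := rfl
  have hinj : Set.InjOn (fun p : Fin (n+n) × Fin (n+n) => ((a : Fin (n+n)), p.1)) Lexp := by
    rintro ⟨u, v⟩ ⟨hv, _, _⟩ ⟨u', v'⟩ ⟨hv', _, _⟩ heq
    exact Prod.ext (congrArg Prod.snd heq) (hv.trans hv'.symm)
  have hsub : insert ((a : Fin (n+n)), b)
      (insert ((a : Fin (n+n)), a') ((fun p : Fin (n+n) × Fin (n+n) => ((a : Fin (n+n)), p.1)) '' Lexp)) ⊆ Gexp := by
    rintro p (rfl | rfl | ⟨q, hq, rfl⟩)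
    · exact Or.inl ⟨rfl, show (a : ℕ) < (b : ℕ) by omega, show (b : ℕ) ≤ (b : ℕ) by omega⟩
    · exact Or.inl ⟨rfl, show (a : ℕ) < (a' : ℕ) by omega, show (a' : ℕ) ≤ (b : ℕ) by omega⟩
    · obtain ⟨hv, hu1, hu2⟩ := hq
      exact Or.inl ⟨rfl, show (a : ℕ) < (q.1 : ℕ) by omega, show (q.1 : ℕ) ≤ (b : ℕ) by omega⟩
  have e2 : ((a : Fin (n+n)), a') ∉ (fun p : Fin (n+n) × Fin (n+n) => ((a : Fin (n+n)), p.1)) '' Lexp := by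
    rintro ⟨q, hq, heq⟩
    obtain ⟨hv, hu1, hu2⟩ := hq
    have heq' : ((a : Fin (n+n)), q.1) = ((a : Fin (n+n)), a') := heq
    have : (q.1 : ℕ) = (a' : ℕ) := congrArg Fin.val (congrArg Prod.snd heq')
    omega
  have e1 : ((a : Fin (n+n)), b) ∉ insert ((a : Fin (n+n)), a')
      ((fun p : Fin (n+n) × Fin (n+n) => ((a : Fin (n+n)), p.1)) '' Lexp) := by
    rintro (heq | ⟨q, hq, heq⟩)
    · have : (b : ℕ) = (a' : ℕ) := congrArg Fin.val (congrArg Prod.snd heq)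
      omega
    · obtain ⟨hv, hu1, hu2⟩ := hq
      have heq' : ((a : Fin (n+n)), q.1) = ((a : Fin (n+n)), b) := heq
      have : (q.1 : ℕ) = (b : ℕ) := congrArg Fin.val (congrArg Prod.snd heq')
      omega
  have hc2 : (insert ((a : Fin (n+n)), b) (insert ((a : Fin (n+n)), a')
      ((fun p : Fin (n+n) × Fin (n+n) => ((a : Fin (n+n)), p.1)) '' Lexp))).ncard = Lexp.ncard + 2 := by
    rw [Set.ncard_insert_of_notMem e1 (Set.toFinite _), Set.ncard_insert_of_notMem e2 (Set.toFinite _),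
      Set.ncard_image_of_injOn hinj]
  have hle : Lexp.ncard + 2 ≤ Gexp.ncard := by
    rw [← hc2]
    exact Set.ncard_le_ncard hsub (Set.toFinite _)
  rw [hLd, hGd] at key
  omega

end
lemma swap_eq_swap {μ : ℕ} {a b c d : Fin μ} (h1 : (a : ℕ) < (b : ℕ)) (h2 : (c : ℕ) < (d : ℕ))
    (h : Equiv.swap a b = Equiv.swap c d) : a = c ∧ b = d := by
  have hc : Equiv.swap a b c = d := by rw [h, Equiv.swap_apply_left]
  rcases eq_or_ne c a with rfl | hca
  · rw [Equiv.swap_apply_left] at hc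
    exact ⟨rfl, hc⟩
  rcases eq_or_ne c b with rfl | hcb
  · rw [Equiv.swap_apply_right] at hc
    exact absurd (congrArg Fin.val hc) (by omega)
  · rw [Equiv.swap_apply_of_ne_of_ne hca hcb] at hc
    exact absurd (congrArg Fin.val hc) (by omega)

/-- The Bruhat covers of `σ_GS = (1,…,n, 2n, …, n+1)` are exactly the
`σ_GS · s_i = s_i · σ_GS` for `i = 1,…,n-1` and the `σ_GS · t_{n,j}` for
`j = n+1,…,2n`, and there are exactly `(n-1) + n` of them. -/
theorem stmt_19 {n : ℕ} (hn : 1 ≤ n) (σ : Equiv.Perm (Fin (n + n)))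
    (hσ : ∀ i : Fin (n + n),
      (σ i : ℕ) = if (i : ℕ) < n then (i : ℕ) else 3 * n - 1 - (i : ℕ)) :
    (∀ w : Equiv.Perm (Fin (n + n)),
      BruhatCover σ w ↔
        ((∃ i i' : Fin (n + n), (i' : ℕ) = (i : ℕ) + 1 ∧ (i' : ℕ) < n ∧
            w = σ * Equiv.swap i i') ∨
         (∃ m j : Fin (n + n), (m : ℕ) + 1 = n ∧ n ≤ (j : ℕ) ∧
            w = σ * Equiv.swap m j))) ∧
    (∀ i i' : Fin (n + n), (i' : ℕ) = (i : ℕ) + 1 → (i' : ℕ) < n →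
      σ * Equiv.swap i i' = Equiv.swap i i' * σ) ∧
    {w : Equiv.Perm (Fin (n + n)) | BruhatCover σ w}.ncard = (n - 1) + n := by
  have hiff : ∀ w : Equiv.Perm (Fin (n + n)),
      BruhatCover σ w ↔
        ((∃ i i' : Fin (n + n), (i' : ℕ) = (i : ℕ) + 1 ∧ (i' : ℕ) < n ∧
            w = σ * Equiv.swap i i') ∨
         (∃ m j : Fin (n + n), (m : ℕ) + 1 = n ∧ n ≤ (j : ℕ) ∧
            w = σ * Equiv.swap m j)) := by
    have main : ∀ a b : Fin (n + n), (a : ℕ) < (b : ℕ) →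
        invCount (σ * Equiv.swap a b) = invCount σ + 1 →
        ((∃ i i' : Fin (n + n), (i' : ℕ) = (i : ℕ) + 1 ∧ (i' : ℕ) < n ∧
            σ * Equiv.swap a b = σ * Equiv.swap i i') ∨
         (∃ m j : Fin (n + n), (m : ℕ) + 1 = n ∧ n ≤ (j : ℕ) ∧
            σ * Equiv.swap a b = σ * Equiv.swap m j)) := by
      intro a b hab hlen
      by_cases hbn : (b : ℕ) < n
      · by_cases hba : (b : ℕ) = (a : ℕ) + 1
        · exact Or.inl ⟨a, b, hba, hbn, rfl⟩
        · have := cover_A2 σ hσ a b hab hbn hba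
          omega
      · push_neg at hbn
        by_cases han : (a : ℕ) + 1 = n
        · exact Or.inr ⟨a, b, han, hbn, rfl⟩
        · by_cases ha2 : (a : ℕ) < n
          · have := cover_B2 σ hσ a b (by omega) hbn
            omega
          · have := cover_C σ hσ a b (by omega) hab
            omega
    intro w
    constructor
    · rintro ⟨⟨a, b, hab, rfl⟩, hlen⟩
      rcases hab.lt_or_gt with hlt | hlt
      · exact main a b (Fin.lt_def.mp hlt) hlen
      · rw [Equiv.swap_comm a b] at hlen ⊢
        exact main b a (Fin.lt_def.mp hlt) hlen
    · rintro (⟨i, i', h1, h2, rfl⟩ | ⟨mm, j, h1, h2, rfl⟩)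
      · exact ⟨⟨i, i', fun h => absurd (congrArg Fin.val h) (by omega), rfl⟩,
          cover_A1 σ hσ i i' h1 h2⟩
      · exact ⟨⟨mm, j, fun h => absurd (congrArg Fin.val h) (by omega), rfl⟩,
          cover_B1 σ hσ mm j h1 h2⟩
  refine ⟨hiff, ?_, ?_⟩
  · intro i i' h1 h2
    have hi : σ i = i := Fin.ext (by rw [hσ i, if_pos (show (i : ℕ) < n by omega)])
    have hi' : σ i' = i' := Fin.ext (by rw [hσ i', if_pos (show (i' : ℕ) < n by omega)])
    calc σ * Equiv.swap i i' = Equiv.swap (σ i) (σ i') * σ :=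
          Equiv.mul_swap_eq_swap_mul σ i i'
      _ = Equiv.swap i i' * σ := by rw [hi, hi']
  · -- counting
    set P1 : Set (Fin (n+n) × Fin (n+n)) :=
      {p | (p.2 : ℕ) = (p.1 : ℕ) + 1 ∧ (p.2 : ℕ) < n} with hP1def
    set P2 : Set (Fin (n+n) × Fin (n+n)) :=
      {p | (p.1 : ℕ) + 1 = n ∧ n ≤ (p.2 : ℕ)} with hP2def
    set F : Fin (n+n) × Fin (n+n) → Equiv.Perm (Fin (n+n)) :=
      fun p => σ * Equiv.swap p.1 p.2 with hFdef
    have hCeq : {w : Equiv.Perm (Fin (n + n)) | BruhatCover σ w} = F '' (P1 ∪ P2) := by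
      ext w
      rw [Set.mem_setOf_eq, hiff w]
      constructor
      · rintro (⟨i, i', h1, h2, rfl⟩ | ⟨mm, j, h1, h2, rfl⟩)
        · exact ⟨(i, i'), Or.inl ⟨h1, h2⟩, rfl⟩
        · exact ⟨(mm, j), Or.inr ⟨h1, h2⟩, rfl⟩
      · rintro ⟨q, hq | hq, rfl⟩
        · exact Or.inl ⟨q.1, q.2, hq.1, hq.2, rfl⟩
        · exact Or.inr ⟨q.1, q.2, hq.1, hq.2, rfl⟩
    have hFinj : Set.InjOn F (P1 ∪ P2) := by
      intro p hp q hq heq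
      have hswap : Equiv.swap p.1 p.2 = Equiv.swap q.1 q.2 := mul_left_cancel heq
      have hp' : (p.1 : ℕ) < (p.2 : ℕ) := by
        rcases hp with ⟨h1, h2⟩ | ⟨h1, h2⟩ <;> omega
      have hq' : (q.1 : ℕ) < (q.2 : ℕ) := by
        rcases hq with ⟨h1, h2⟩ | ⟨h1, h2⟩ <;> omega
      obtain ⟨e1, e2⟩ := swap_eq_swap hp' hq' hswap
      exact Prod.ext e1 e2
    have hdisj : Disjoint P1 P2 := by
      rw [Set.disjoint_left]
      rintro p ⟨h1, h2⟩ ⟨h3, h4⟩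
      omega
    have hP1card : P1.ncard = n - 1 := by
      have hinj : Set.InjOn Prod.fst P1 := by
        rintro p ⟨h1, h2⟩ q ⟨h3, h4⟩ heq
        refine Prod.ext heq (Fin.ext ?_)
        have : (p.1 : ℕ) = (q.1 : ℕ) := congrArg Fin.val heq
        omega
      have himg : Prod.fst '' P1 = ↑(Finset.Iio (⟨n - 1, by omega⟩ : Fin (n + n))) := by
        ext i
        simp only [Set.mem_image, Finset.coe_Iio, Set.mem_Iio, Fin.lt_def]
        constructor
        · rintro ⟨p, ⟨h1, h2⟩, rfl⟩
          show (p.1 : ℕ) < n - 1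
          omega
        · intro hi
          have hi' : (i : ℕ) < n - 1 := hi
          exact ⟨(i, ⟨(i : ℕ) + 1, by omega⟩), ⟨rfl, show (i : ℕ) + 1 < n by omega⟩, rfl⟩
      have := Set.ncard_image_of_injOn hinj
      rw [himg, Set.ncard_coe_finset, Fin.card_Iio] at this
      exact this.symm
    have hP2card : P2.ncard = n := by
      have hinj : Set.InjOn Prod.snd P2 := by
        rintro p ⟨h1, h2⟩ q ⟨h3, h4⟩ heq
        refine Prod.ext (Fin.ext ?_) heq
        omega
      have himg : Prod.snd '' P2 = ↑(Finset.Ici (⟨n, by omega⟩ : Fin (n + n))) := by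
        ext j
        simp only [Set.mem_image, Finset.coe_Ici, Set.mem_Ici, Fin.le_def]
        constructor
        · rintro ⟨p, ⟨h1, h2⟩, rfl⟩
          show n ≤ (p.2 : ℕ)
          omega
        · intro hj
          have hj' : n ≤ (j : ℕ) := hj
          exact ⟨(⟨n - 1, by omega⟩, j), ⟨show n - 1 + 1 = n by omega, show n ≤ (j : ℕ) by omega⟩, rfl⟩
      have := Set.ncard_image_of_injOn hinj
      rw [himg, Set.ncard_coe_finset, Fin.card_Ici] at this
      exact this.symm.trans (show n + n - n = n by omega)
    rw [hCeq, Set.ncard_image_of_injOn hFinj,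
      Set.ncard_union_eq hdisj (Set.toFinite _) (Set.toFinite _), hP1card, hP2card]
end
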